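/- arXiv:1907.13005 — 11 statements merged into one kernel-verified Lean document; each statement's English description precedes it below -/
import Mathlib

section
/- Let r ≥ 1 and n ≥ 0 be integers and let (V,B₁,B₂,B₃,I,J) be a framed representation of the quiver with potential (𝒬,𝒲) of type (r,n) over the field ℂ. Then (V,B₁,B₂,B₃,I,J) is cyclic if and only if the underlying framed ADHM data (V,B₁,B₂,I,J) is stable. -/
open LinearMap

/-- The regular nilpotent endomorphism `A_r` of `R^r`, sending the standard basis vector
`e_a` to `e_{a+1}` (and the last one to `0`). -/
noncomputable def Ar (R : Type*) [CommRing R] (r : ℕ) : (Fin r → R) →ₗ[R] (Fin r → R) where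
  toFun v i := if h : (i : ℕ) = 0 then 0
    else v ⟨(i : ℕ) - 1, lt_of_le_of_lt (Nat.sub_le _ _) i.isLt⟩
  map_add' u v := by funext i; by_cases h : (i : ℕ) = 0 <;> simp [h]
  map_smul' c v := by funext i; by_cases h : (i : ℕ) = 0 <;> simp [h]

/-- A framed representation `(V, B₁, B₂, B₃, I, J)` of the quiver with
potential `(𝒬, 𝒲)` of type `(r, n)` over `ℂ` is cyclic if and only if the underlying
framed ADHM data `(V, B₁, B₂, I, J)` is stable. -/
theorem stmt0 (r n : ℕ) (hr : 1 ≤ r)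
    (V : Type*) [AddCommGroup V] [Module ℂ V] [FiniteDimensional ℂ V]
    (hdim : Module.finrank ℂ V = n)
    (B₁ B₂ B₃ : V →ₗ[ℂ] V) (I : (Fin r → ℂ) →ₗ[ℂ] V) (J : V →ₗ[ℂ] (Fin r → ℂ))
    (hADHM : B₁ ∘ₗ B₂ - B₂ ∘ₗ B₁ + I ∘ₗ J = 0)
    (hJ3 : J ∘ₗ B₃ = Ar ℂ r ∘ₗ J)
    (h3I : B₃ ∘ₗ I = I ∘ₗ Ar ℂ r)
    (h31 : B₃ ∘ₗ B₁ = B₁ ∘ₗ B₃)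
    (h32 : B₃ ∘ₗ B₂ = B₂ ∘ₗ B₃) :
    (∀ W : Submodule ℂ V,
        (∀ v ∈ W, B₁ v ∈ W) → (∀ v ∈ W, B₂ v ∈ W) → (∀ v ∈ W, B₃ v ∈ W) →
        (∀ x, I x ∈ W) → W = ⊤) ↔
      (∀ W : Submodule ℂ V,
        (∀ v ∈ W, B₁ v ∈ W) → (∀ v ∈ W, B₂ v ∈ W) →
        (∀ x, I x ∈ W) → W = ⊤) := by
  constructor
  · -- cyclic → stable
    intro hcyc W hW1 hW2 hWI
    -- W' : vectors all of whose B₃-iterates stay in W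
    set W' : Submodule ℂ V := ⨅ k : ℕ, W.comap ((B₃ ^ k : V →ₗ[ℂ] V)) with hW'def
    have hmem : ∀ v : V, v ∈ W' ↔ ∀ k : ℕ, (B₃ ^ k) v ∈ W := by
      intro v
      simp [hW'def, Submodule.mem_iInf]
    -- invariance of W' under B commuting with B₃ and preserving W
    have key : ∀ B : V →ₗ[ℂ] V, (∀ v ∈ W, B v ∈ W) → B₃ * B = B * B₃ →
        ∀ v ∈ W', B v ∈ W' := by
      intro B hB hcomm v hv
      rw [hmem] at hv ⊢
      intro k
      have hc : (B₃ ^ k) * B = B * (B₃ ^ k) := (Commute.pow_left hcomm k).eq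
      have : (B₃ ^ k) (B v) = B ((B₃ ^ k) v) := by
        have := congrArg (fun f : V →ₗ[ℂ] V => f v) hc
        simpa using this
      rw [this]
      exact hB _ (hv k)
    have hW'1 : ∀ v ∈ W', B₁ v ∈ W' := key B₁ hW1 h31
    have hW'2 : ∀ v ∈ W', B₂ v ∈ W' := key B₂ hW2 h32
    have hW'3 : ∀ v ∈ W', B₃ v ∈ W' := by
      intro v hv
      rw [hmem] at hv ⊢
      intro k
      have : (B₃ ^ k) (B₃ v) = (B₃ ^ (k + 1)) v := by
        rw [pow_succ]; rfl
      rw [this]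
      exact hv (k + 1)
    have hW'I : ∀ x, I x ∈ W' := by
      intro x
      rw [hmem]
      intro k
      have hI : (B₃ ^ k) ∘ₗ I = I ∘ₗ (Ar ℂ r ^ k) := by
        induction k with
        | zero => ext y; rfl
        | succ k ih =>
          rw [pow_succ, pow_succ]
          calc (B₃ ^ k * B₃) ∘ₗ I = (B₃ ^ k) ∘ₗ (B₃ ∘ₗ I) := by
                ext y; rfl
            _ = (B₃ ^ k) ∘ₗ (I ∘ₗ Ar ℂ r) := by rw [h3I]
            _ = ((B₃ ^ k) ∘ₗ I) ∘ₗ Ar ℂ r := by ext y; rfl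
            _ = (I ∘ₗ (Ar ℂ r ^ k)) ∘ₗ Ar ℂ r := by rw [ih]
            _ = I ∘ₗ (Ar ℂ r ^ k * Ar ℂ r) := by ext y; rfl
      have : (B₃ ^ k) (I x) = I ((Ar ℂ r ^ k) x) := by
        have := congrArg (fun f => f x) hI
        simpa using this
      rw [this]
      exact hWI _
    have hW'top : W' = ⊤ := hcyc W' hW'1 hW'2 hW'3 hW'I
    have hle : W' ≤ W := by
      intro v hv
      have := (hmem v).1 hv 0
      simpa using this
    rw [hW'top] at hle
    exact top_le_iff.mp hle
  · -- stable → cyclic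
    intro hst W h1 h2 _ hI
    exact hst W h1 h2 hI
end

section
/- Let r ≥ 1 and n ≥ 0 be integers, let K be a field of characteristic zero, and let (V,B₁,B₂,I,J) be stable framed ADHM data of type (r,n) over K. If B₃ and B₃′ are endomorphisms of V such that both (V,B₁,B₂,B₃,I,J) and (V,B₁,B₂,B₃′,I,J) are framed representations of the quiver with potential (𝒬,𝒲) of type (r,n), then B₃ = B₃′. -/
open LinearMap

/-- Given stable framed ADHM data `(V, B₁, B₂, I, J)` of type `(r, n)` over a
field `K` of characteristic zero, the endomorphism `B₃` extending it to a framed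
representation of the quiver with potential `(𝒬, 𝒲)` is unique, if it exists. -/
theorem stmt1 (r n : ℕ) (hr : 1 ≤ r) (K : Type*) [Field K] [CharZero K]
    (V : Type*) [AddCommGroup V] [Module K V] [FiniteDimensional K V]
    (hdim : Module.finrank K V = n)
    (B₁ B₂ : V →ₗ[K] V) (I : (Fin r → K) →ₗ[K] V) (J : V →ₗ[K] (Fin r → K))
    (hADHM : B₁ ∘ₗ B₂ - B₂ ∘ₗ B₁ + I ∘ₗ J = 0)
    (hstable : ∀ W : Submodule K V,
        (∀ v ∈ W, B₁ v ∈ W) → (∀ v ∈ W, B₂ v ∈ W) → (∀ x, I x ∈ W) → W = ⊤)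
    (B₃ B₃' : V →ₗ[K] V)
    (hJ3 : J ∘ₗ B₃ = Ar K r ∘ₗ J)
    (h3I : B₃ ∘ₗ I = I ∘ₗ Ar K r)
    (h31 : B₃ ∘ₗ B₁ = B₁ ∘ₗ B₃)
    (h32 : B₃ ∘ₗ B₂ = B₂ ∘ₗ B₃)
    (hJ3' : J ∘ₗ B₃' = Ar K r ∘ₗ J)
    (h3I' : B₃' ∘ₗ I = I ∘ₗ Ar K r)
    (h31' : B₃' ∘ₗ B₁ = B₁ ∘ₗ B₃')
    (h32' : B₃' ∘ₗ B₂ = B₂ ∘ₗ B₃') :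
    B₃ = B₃' := by
  have key : LinearMap.ker (B₃ - B₃') = ⊤ := by
    apply hstable
    · intro v hv
      simp only [LinearMap.mem_ker, LinearMap.sub_apply] at hv ⊢
      have e1 := LinearMap.congr_fun h31 v
      have e2 := LinearMap.congr_fun h31' v
      simp only [LinearMap.comp_apply] at e1 e2
      rw [e1, e2, ← map_sub, show B₃ v - B₃' v = 0 from hv, map_zero]
    · intro v hv
      simp only [LinearMap.mem_ker, LinearMap.sub_apply] at hv ⊢
      have e1 := LinearMap.congr_fun h32 v
      have e2 := LinearMap.congr_fun h32' v
      simp only [LinearMap.comp_apply] at e1 e2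
      rw [e1, e2, ← map_sub, show B₃ v - B₃' v = 0 from hv, map_zero]
    · intro x
      simp only [LinearMap.mem_ker, LinearMap.sub_apply]
      have e1 := LinearMap.congr_fun h3I x
      have e2 := LinearMap.congr_fun h3I' x
      simp only [LinearMap.comp_apply] at e1 e2
      rw [e1, e2, sub_self]
  ext v
  have : (B₃ - B₃') v = 0 := by
    have := key ▸ Submodule.mem_top (R := K) (M := V) (x := v)
    exact this
  simpa [sub_eq_zero] using this
end

section
/- Let r ≥ 1 be an integer. Let R be a discrete valuation ring containing ℂ, with maximal ideal 𝔪, residue field k = R/𝔪 and fraction field K. Let V_R be a finite free R-module, let B₁, B₂ be R-linear endomorphisms of V_R, and let I : R^r → V_R and J : V_R → R^r be R-linear maps satisfying [B₁,B₂] + I∘J = 0. Assume that the reduction modulo 𝔪, namely (V_R ⊗_R k, B₁ ⊗ k, B₂ ⊗ k, I ⊗ k, J ⊗ k), is stable framed ADHM data over k. If B₃ is a K-linear endomorphism of V_K = K ⊗_R V_R that commutes with the base changes B₁ ⊗ K and B₂ ⊗ K and satisfies B₃ ∘ (I ⊗ K) = (I ⊗ K) ∘ A_r (with A_r taken over K),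 then there exists an R-linear endomorphism B₃′ of V_R whose base change to K equals B₃. -/
open LinearMap TensorProduct

/-!
The submodule `W ⊆ V` of vectors `v` with `B₃ (1 ⊗ v) ∈ V` is invariant under `B₁`, `B₂` and
contains the image of `I`, because `B₃` commutes with `B₁ ⊗ K`, `B₂ ⊗ K` and intertwines
`I ⊗ K` with `A_r ⊗ K`, all of which are defined over `R`. Its base change to the residue
field `k` is then invariant under `B₁ ⊗ k`, `B₂ ⊗ k` and contains the image of `I ⊗ k`, so
stability of the reduction and Nakayama's lemma force `W = V`. Hence `B₃` maps `V` into `V`,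
and since `V → K ⊗ V` is injective (`V` is free, hence flat) this restriction is an `R`-linear
endomorphism of `V` whose base change is `B₃`.
-/

section Stability

variable {R M P : Type*} [CommRing R] [AddCommGroup M] [Module R M] [AddCommGroup P] [Module R P]

def IsADHMStable (B₁ B₂ : M →ₗ[R] M) (I : P →ₗ[R] M) : Prop :=
  ∀ W : Submodule R M, (∀ v ∈ W, B₁ v ∈ W) → (∀ v ∈ W, B₂ v ∈ W) → (∀ x, I x ∈ W) → W = ⊤

theorem Submodule.baseChange_le_comap_baseChange (A : Type*) [CommRing A] [Algebra R A]
    {f : P →ₗ[R] M} {p : Submodule R P} {q : Submodule R M} (h : p ≤ q.comap f) :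
    p.baseChange A ≤ (q.baseChange A).comap (f.baseChange A) := by
  rw [Submodule.baseChange_eq_span, Submodule.span_le]
  rintro _ ⟨m, hm, rfl⟩
  change f.baseChange A (1 ⊗ₜ m) ∈ q.baseChange A
  rw [baseChange_tmul]
  exact Submodule.tmul_mem_baseChange_of_mem 1 (h hm)

theorem IsLocalRing.eq_top_of_baseChange_residueField_eq_top [IsLocalRing R] [Module.Finite R M]
    {W : Submodule R M} (h : W.baseChange (IsLocalRing.ResidueField R) = ⊤) : W = ⊤ := by
  rw [← IsLocalRing.map_tensorProduct_mk_eq_top, ← Submodule.span_eq (W.map _),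
    ← Submodule.restrictScalars_span R _ IsLocalRing.residue_surjective,
    ← Submodule.baseChange_eq_span, h, Submodule.restrictScalars_top]

theorem IsADHMStable.of_baseChange_residueField [IsLocalRing R] [Module.Finite R M]
    {B₁ B₂ : M →ₗ[R] M} {I : P →ₗ[R] M}
    (h : IsADHMStable (B₁.baseChange (IsLocalRing.ResidueField R))
      (B₂.baseChange (IsLocalRing.ResidueField R)) (I.baseChange (IsLocalRing.ResidueField R))) :
    IsADHMStable B₁ B₂ I := by
  intro W h₁ h₂ hI
  have hI' := Submodule.baseChange_le_comap_baseChange (IsLocalRing.ResidueField R)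
    (p := ⊤) (q := W) (f := I) fun x _ => hI x
  rw [Submodule.baseChange_top] at hI'
  refine IsLocalRing.eq_top_of_baseChange_residueField_eq_top (h _ ?_ ?_ fun x => hI' trivial)
  · exact fun v hv => Submodule.baseChange_le_comap_baseChange _ (fun v => h₁ v) hv
  · exact fun v hv => Submodule.baseChange_le_comap_baseChange _ (fun v => h₂ v) hv

end Stability

section Descent

variable {R A M P : Type*} [CommRing R] [CommRing A] [Algebra R A]
  [AddCommGroup M] [Module R M] [AddCommGroup P] [Module R P]

def descentSubmodule (B : A ⊗[R] M →ₗ[A] A ⊗[R] M) : Submodule R M :=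
  (range (TensorProduct.mk R A M 1)).comap (B.restrictScalars R ∘ₗ TensorProduct.mk R A M 1)

variable {B : A ⊗[R] M →ₗ[A] A ⊗[R] M}

theorem mem_descentSubmodule {v : M} :
    v ∈ descentSubmodule B ↔ ∃ u : M, (1 : A) ⊗ₜ[R] u = B (1 ⊗ₜ v) :=
  Iff.rfl

theorem map_mem_descentSubmodule {f : M →ₗ[R] M} (hf : B ∘ₗ f.baseChange A = f.baseChange A ∘ₗ B)
    {v : M} (hv : v ∈ descentSubmodule B) : f v ∈ descentSubmodule B := by
  obtain ⟨u, hu⟩ := mem_descentSubmodule.mp hv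
  refine mem_descentSubmodule.mpr ⟨f u, ?_⟩
  calc (1 : A) ⊗ₜ[R] f u = f.baseChange A (B (1 ⊗ₜ v)) := by rw [← hu, baseChange_tmul]
    _ = B (f.baseChange A (1 ⊗ₜ v)) := (LinearMap.congr_fun hf _).symm
    _ = B (1 ⊗ₜ f v) := by rw [baseChange_tmul]

theorem apply_mem_descentSubmodule {f : P →ₗ[R] M} {g : P →ₗ[R] P}
    (hfg : B ∘ₗ f.baseChange A = f.baseChange A ∘ₗ g.baseChange A) (x : P) :
    f x ∈ descentSubmodule B := by
  refine mem_descentSubmodule.mpr ⟨f (g x), ?_⟩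
  calc (1 : A) ⊗ₜ[R] f (g x) = f.baseChange A (g.baseChange A (1 ⊗ₜ x)) := by
        rw [baseChange_tmul, baseChange_tmul]
    _ = B (1 ⊗ₜ f x) := by rw [← comp_apply, ← hfg, comp_apply, baseChange_tmul]

theorem exists_baseChange_eq_of_descentSubmodule_eq_top
    (hinj : Function.Injective (TensorProduct.mk R A M 1)) (h : descentSubmodule B = ⊤) :
    ∃ B' : M →ₗ[R] M, B'.baseChange A = B := by
  have hmaps : ∀ v, (B.restrictScalars R ∘ₗ TensorProduct.mk R A M 1) v ∈
      range (TensorProduct.mk R A M 1) :=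
    fun v => (h ▸ Submodule.mem_top : v ∈ descentSubmodule B)
  let e := LinearEquiv.ofInjective _ hinj
  refine ⟨e.symm.toLinearMap ∘ₗ codRestrict _ _ hmaps, ?_⟩
  ext v
  simp only [AlgebraTensorModule.curry_apply, restrictScalars_apply, curry_apply,
    baseChange_tmul]
  exact congrArg Subtype.val (e.apply_symm_apply _)

end Descent

theorem stmt2_general (r : ℕ)
    (R : Type*) [CommRing R] [IsDomain R] [IsDiscreteValuationRing R]
    (V : Type*) [AddCommGroup V] [Module R V] [Module.Finite R V] [Module.Free R V]
    (B₁ B₂ : V →ₗ[R] V) (I : (Fin r → R) →ₗ[R] V)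
    (hstable : ∀ W : Submodule (IsLocalRing.ResidueField R)
        (IsLocalRing.ResidueField R ⊗[R] V),
        (∀ v ∈ W, B₁.baseChange (IsLocalRing.ResidueField R) v ∈ W) →
        (∀ v ∈ W, B₂.baseChange (IsLocalRing.ResidueField R) v ∈ W) →
        (∀ x, I.baseChange (IsLocalRing.ResidueField R) x ∈ W) → W = ⊤)
    (K : Type*) [Field K] [Algebra R K] [IsFractionRing R K]
    (B₃ : K ⊗[R] V →ₗ[K] K ⊗[R] V)
    (h31 : B₃ ∘ₗ B₁.baseChange K = B₁.baseChange K ∘ₗ B₃)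
    (h32 : B₃ ∘ₗ B₂.baseChange K = B₂.baseChange K ∘ₗ B₃)
    (h3I : B₃ ∘ₗ I.baseChange K = I.baseChange K ∘ₗ (Ar R r).baseChange K) :
    ∃ B₃' : V →ₗ[R] V, B₃'.baseChange K = B₃ := by
  have hdescent : descentSubmodule B₃ = ⊤ :=
    IsADHMStable.of_baseChange_residueField hstable _
      (fun _ => map_mem_descentSubmodule h31) (fun _ => map_mem_descentSubmodule h32)
      (apply_mem_descentSubmodule h3I)
  exact exists_baseChange_eq_of_descentSubmodule_eq_top
    (Module.Flat.tensorProduct_mk_injective (R := R) (S := K) (M := V)) hdescent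

/-- Let `R` be a discrete valuation ring containing `ℂ`, with residue field
`k` and fraction field `K`. Let `(V_R, B₁, B₂, I, J)` be framed ADHM data over `R` (with
`V_R` finite free) whose reduction modulo the maximal ideal is stable. Then any `K`-linear
endomorphism `B₃` of `V_K = K ⊗ V_R` commuting with `B₁ ⊗ K`, `B₂ ⊗ K` and satisfying
`B₃ ∘ (I ⊗ K) = (I ⊗ K) ∘ A_r` descends to an `R`-linear endomorphism of `V_R`. -/
theorem stmt2 (r : ℕ) (hr : 1 ≤ r)
    (R : Type*) [CommRing R] [IsDomain R] [IsDiscreteValuationRing R] [Algebra ℂ R]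
    (V : Type*) [AddCommGroup V] [Module R V] [Module.Finite R V] [Module.Free R V]
    (B₁ B₂ : V →ₗ[R] V) (I : (Fin r → R) →ₗ[R] V) (J : V →ₗ[R] (Fin r → R))
    (hADHM : B₁ ∘ₗ B₂ - B₂ ∘ₗ B₁ + I ∘ₗ J = 0)
    (hstable : ∀ W : Submodule (IsLocalRing.ResidueField R)
        (IsLocalRing.ResidueField R ⊗[R] V),
        (∀ v ∈ W, B₁.baseChange (IsLocalRing.ResidueField R) v ∈ W) →
        (∀ v ∈ W, B₂.baseChange (IsLocalRing.ResidueField R) v ∈ W) →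
        (∀ x, I.baseChange (IsLocalRing.ResidueField R) x ∈ W) → W = ⊤)
    (K : Type*) [Field K] [Algebra R K] [IsFractionRing R K]
    (B₃ : K ⊗[R] V →ₗ[K] K ⊗[R] V)
    (h31 : B₃ ∘ₗ B₁.baseChange K = B₁.baseChange K ∘ₗ B₃)
    (h32 : B₃ ∘ₗ B₂.baseChange K = B₂.baseChange K ∘ₗ B₃)
    (h3I : B₃ ∘ₗ I.baseChange K = I.baseChange K ∘ₗ (Ar R r).baseChange K) :
    ∃ B₃' : V →ₗ[R] V, B₃'.baseChange K = B₃ :=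
  stmt2_general r R V B₁ B₂ I hstable K B₃ h31 h32 h3I
end

section
/- Let r ≥ 1 and n ≥ 0 be integers and let (V,B₁,B₂,I,J) be stable framed ADHM data of type (r,n) over a field K. If ε₃ is an endomorphism of V satisfying [B₁,ε₃] = 0, [B₂,ε₃] = 0, ε₃∘I = 0 and J∘ε₃ = 0, then ε₃ = 0. -/
open LinearMap

theorem LinearMap.apply_mem_ker_of_comp_eq_comp {R M M₂ : Type*} [Semiring R]
    [AddCommMonoid M] [AddCommMonoid M₂] [Module R M] [Module R M₂]
    {f : M →ₗ[R] M₂} {B : M →ₗ[R] M} {C : M₂ →ₗ[R] M₂} (h : C ∘ₗ f = f ∘ₗ B)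
    {v : M} (hv : v ∈ ker f) : B v ∈ ker f := by
  rw [mem_ker] at hv ⊢
  rw [← comp_apply f B, ← h, comp_apply, hv, map_zero]

theorem stmt3_general (r : ℕ) (K : Type*) [Field K]
    (V : Type*) [AddCommGroup V] [Module K V]
    (B₁ B₂ : V →ₗ[K] V) (I : (Fin r → K) →ₗ[K] V)
    (hstable : ∀ W : Submodule K V,
        (∀ v ∈ W, B₁ v ∈ W) → (∀ v ∈ W, B₂ v ∈ W) → (∀ x, I x ∈ W) → W = ⊤)
    (ε₃ : V →ₗ[K] V)
    (h1 : B₁ ∘ₗ ε₃ - ε₃ ∘ₗ B₁ = 0)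
    (h2 : B₂ ∘ₗ ε₃ - ε₃ ∘ₗ B₂ = 0)
    (hI : ε₃ ∘ₗ I = 0) :
    ε₃ = 0 := by
  have hker : ker ε₃ = ⊤ :=
    hstable _ (fun _ => apply_mem_ker_of_comp_eq_comp (sub_eq_zero.mp h1))
      (fun _ => apply_mem_ker_of_comp_eq_comp (sub_eq_zero.mp h2))
      (fun x => LinearMap.congr_fun hI x)
  exact ker_eq_top.mp hker

/-- Let `(V, B₁, B₂, I, J)` be stable framed ADHM data of type `(r, n)` over a
field `K`. If `ε₃` is an endomorphism of `V` commuting with `B₁` and `B₂` and satisfying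
`ε₃ ∘ I = 0` and `J ∘ ε₃ = 0`, then `ε₃ = 0`. -/
theorem stmt3 (r n : ℕ) (hr : 1 ≤ r) (K : Type*) [Field K]
    (V : Type*) [AddCommGroup V] [Module K V] [FiniteDimensional K V]
    (hdim : Module.finrank K V = n)
    (B₁ B₂ : V →ₗ[K] V) (I : (Fin r → K) →ₗ[K] V) (J : V →ₗ[K] (Fin r → K))
    (hADHM : B₁ ∘ₗ B₂ - B₂ ∘ₗ B₁ + I ∘ₗ J = 0)
    (hstable : ∀ W : Submodule K V,
        (∀ v ∈ W, B₁ v ∈ W) → (∀ v ∈ W, B₂ v ∈ W) → (∀ x, I x ∈ W) → W = ⊤)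
    (ε₃ : V →ₗ[K] V)
    (h1 : B₁ ∘ₗ ε₃ - ε₃ ∘ₗ B₁ = 0)
    (h2 : B₂ ∘ₗ ε₃ - ε₃ ∘ₗ B₂ = 0)
    (hI : ε₃ ∘ₗ I = 0)
    (hJ : J ∘ₗ ε₃ = 0) :
    ε₃ = 0 :=
  stmt3_general r K V B₁ B₂ I hstable ε₃ h1 h2 hI
end

section
/- Let r ≥ 1 and n ≥ 0 be integers and let (V,B₁,B₂,B₃,I,J) be a cyclic framed representation of the quiver with potential (𝒬,𝒲) of type (r,n) over a field K. Suppose ε₁, ε₂, ε₃ are endomorphisms of V and η : K^r → V, δ : V → K^r are K-linear maps satisfying the linearized relations [ε₃,B₁] + [B₃,ε₁] = 0, [ε₃,B₂] + [B₃,ε₂] = 0, [ε₁,B₂] + [B₁,ε₂] + I∘δ + η∘J = 0, B₃∘η + ε₃∘I − η∘A_r = 0 and δ∘B₃ + J∘ε₃ − A_r∘δ = 0. If there exists an endomorphism ψ of V with ε₁ = [ψ,B₁], ε₂ = [ψ,B₂], η = ψ∘I and δ = J∘ψ, then ε₃ = [ψ,B₃]. -/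
/-!
Put `φ := ε₃ - [ψ, B₃]`. The linearized relations involving `B₃`, together with `[B₃, Bᵢ] = 0`
and `B₃ ∘ I = I ∘ A_r`, show by the Jacobi identity that `φ` commutes with `B₁` and `B₂` and
that `φ ∘ I = 0`. Hence `ker φ` is a `B₁`, `B₂`-invariant subspace containing the image of `I`.
A cyclic representation is stable: the largest `B₃`-invariant subspace `⋂ₖ B₃⁻ᵏ W` of a
`B₁`, `B₂`-invariant subspace `W ⊇ im I` is again `B₁`, `B₂`-invariant and contains `im I`, so it
is everything. Therefore `ker φ = V`.
-/

open LinearMap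

section Stability

variable {R M N : Type*} [Semiring R] [AddCommMonoid M] [Module R M]
  [AddCommMonoid N] [Module R N]

theorem Submodule.mem_iInf_comap_pow {f : Module.End R M} {p : Submodule R M} {v : M} :
    v ∈ ⨅ k : ℕ, p.comap (f ^ k) ↔ ∀ k : ℕ, (f ^ k) v ∈ p := by
  simp only [Submodule.mem_iInf, Submodule.mem_comap]

theorem Submodule.iInf_comap_pow_invariant_of_commute {f g : Module.End R M}
    {p : Submodule R M} (hfg : Commute f g) (hg : ∀ v ∈ p, g v ∈ p) :
    ∀ v ∈ ⨅ k : ℕ, p.comap (f ^ k), g v ∈ ⨅ k : ℕ, p.comap (f ^ k) := by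
  simp only [Submodule.mem_iInf_comap_pow]
  intro v hv k
  rw [← Module.End.mul_apply, (hfg.pow_left k).eq, Module.End.mul_apply]
  exact hg _ (hv k)

theorem Submodule.iInf_comap_pow_invariant {f : Module.End R M} {p : Submodule R M} :
    ∀ v ∈ ⨅ k : ℕ, p.comap (f ^ k), f v ∈ ⨅ k : ℕ, p.comap (f ^ k) := by
  simp only [Submodule.mem_iInf_comap_pow]
  intro v hv k
  simpa only [pow_succ, Module.End.mul_apply] using hv (k + 1)

theorem stable_of_cyclic {B₁ B₂ B₃ : Module.End R M} {I : N →ₗ[R] M} {A : Module.End R N}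
    (h31 : Commute B₃ B₁) (h32 : Commute B₃ B₂) (h3I : B₃ ∘ₗ I = I ∘ₗ A)
    (hcyclic : ∀ W : Submodule R M,
        (∀ v ∈ W, B₁ v ∈ W) → (∀ v ∈ W, B₂ v ∈ W) → (∀ v ∈ W, B₃ v ∈ W) →
        (∀ x, I x ∈ W) → W = ⊤)
    (W : Submodule R M) (h1 : ∀ v ∈ W, B₁ v ∈ W) (h2 : ∀ v ∈ W, B₂ v ∈ W)
    (hI : ∀ x, I x ∈ W) : W = ⊤ := by
  have hI' : ∀ x, I x ∈ ⨅ k : ℕ, W.comap (B₃ ^ k) := fun x =>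
    Submodule.mem_iInf_comap_pow.mpr fun k => by
      rw [← LinearMap.comp_apply, Module.End.commute_pow_left_of_commute h3I k]
      exact hI _
  have htop := hcyclic _ (Submodule.iInf_comap_pow_invariant_of_commute h31 h1)
    (Submodule.iInf_comap_pow_invariant_of_commute h32 h2) Submodule.iInf_comap_pow_invariant hI'
  exact top_le_iff.mp (htop ▸ iInf_le (fun k : ℕ => W.comap (B₃ ^ k)) 0)

end Stability

theorem eq_zero_of_stable_of_commute {R M N : Type*} [Semiring R] [AddCommMonoid M]
    [Module R M] [AddCommMonoid N] [Module R N] {B₁ B₂ φ : Module.End R M} {I : N →ₗ[R] M}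
    (hstable : ∀ W : Submodule R M,
        (∀ v ∈ W, B₁ v ∈ W) → (∀ v ∈ W, B₂ v ∈ W) → (∀ x, I x ∈ W) → W = ⊤)
    (h1 : Commute φ B₁) (h2 : Commute φ B₂) (hI : φ ∘ₗ I = 0) : φ = 0 := by
  have hker : ker φ = ⊤ := by
    refine hstable _ (fun v hv => ?_) (fun v hv => ?_) fun x => ?_
    · rw [mem_ker, ← Module.End.mul_apply, h1.eq, Module.End.mul_apply, mem_ker.mp hv, map_zero]
    · rw [mem_ker, ← Module.End.mul_apply, h2.eq, Module.End.mul_apply, mem_ker.mp hv, map_zero]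
    · rw [mem_ker, ← LinearMap.comp_apply, hI, LinearMap.zero_apply]
  exact ker_eq_top.mp hker

theorem commute_sub_commutator_of_linearized {R : Type*} [Ring R] {e B B₃ ψ : R}
    (hl : (e * B - B * e) + (B₃ * (ψ * B - B * ψ) - (ψ * B - B * ψ) * B₃) = 0)
    (hc : B₃ * B = B * B₃) :
    Commute (e - (ψ * B₃ - B₃ * ψ)) B := by
  have expand : (e - (ψ * B₃ - B₃ * ψ)) * B - B * (e - (ψ * B₃ - B₃ * ψ)) =
      ((e * B - B * e) + (B₃ * (ψ * B - B * ψ) - (ψ * B - B * ψ) * B₃))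
      + (ψ * (B * B₃ - B₃ * B) + (B₃ * B - B * B₃) * ψ) := by noncomm_ring
  rw [hl, hc, sub_self, mul_zero, zero_mul, add_zero, add_zero] at expand
  exact sub_eq_zero.mp expand

theorem stmt4_general (r : ℕ) (K : Type*) [Field K]
    (V : Type*) [AddCommGroup V] [Module K V]
    (B₁ B₂ B₃ : V →ₗ[K] V) (I : (Fin r → K) →ₗ[K] V)
    (h3I : B₃ ∘ₗ I = I ∘ₗ Ar K r)
    (h31 : B₃ ∘ₗ B₁ = B₁ ∘ₗ B₃)
    (h32 : B₃ ∘ₗ B₂ = B₂ ∘ₗ B₃)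
    (hcyclic : ∀ W : Submodule K V,
        (∀ v ∈ W, B₁ v ∈ W) → (∀ v ∈ W, B₂ v ∈ W) → (∀ v ∈ W, B₃ v ∈ W) →
        (∀ x, I x ∈ W) → W = ⊤)
    (ε₁ ε₂ ε₃ : V →ₗ[K] V) (η : (Fin r → K) →ₗ[K] V)
    (hl1 : (ε₃ ∘ₗ B₁ - B₁ ∘ₗ ε₃) + (B₃ ∘ₗ ε₁ - ε₁ ∘ₗ B₃) = 0)
    (hl2 : (ε₃ ∘ₗ B₂ - B₂ ∘ₗ ε₃) + (B₃ ∘ₗ ε₂ - ε₂ ∘ₗ B₃) = 0)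
    (hl4 : B₃ ∘ₗ η + ε₃ ∘ₗ I - η ∘ₗ Ar K r = 0)
    (ψ : V →ₗ[K] V)
    (hψ1 : ε₁ = ψ ∘ₗ B₁ - B₁ ∘ₗ ψ)
    (hψ2 : ε₂ = ψ ∘ₗ B₂ - B₂ ∘ₗ ψ)
    (hψη : η = ψ ∘ₗ I) :
    ε₃ = ψ ∘ₗ B₃ - B₃ ∘ₗ ψ := by
  subst hψ1 hψ2 hψη
  have hφ1 : Commute (ε₃ - (ψ * B₃ - B₃ * ψ)) B₁ := commute_sub_commutator_of_linearized hl1 h31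
  have hφ2 : Commute (ε₃ - (ψ * B₃ - B₃ * ψ)) B₂ := commute_sub_commutator_of_linearized hl2 h32
  have hφI : (ε₃ - (ψ * B₃ - B₃ * ψ)) ∘ₗ I = 0 := by
    rw [← hl4, comp_assoc (Ar K r) I ψ, ← h3I]
    simp only [Module.End.mul_eq_comp, sub_comp, comp_assoc]
    abel
  have hstable := stable_of_cyclic h31 h32 h3I hcyclic
  exact sub_eq_zero.mp (eq_zero_of_stable_of_commute hstable hφ1 hφ2 hφI)

/-- Let `(V, B₁, B₂, B₃, I, J)` be a cyclic framed representation of the quiver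
with potential `(𝒬, 𝒲)` of type `(r, n)` over a field `K`. If `(ε₁, ε₂, ε₃, η, δ)` satisfies the
linearized relations and `(ε₁, ε₂, η, δ)` is in the image of the linearization of the gauge group
action, i.e. `ε₁ = [ψ, B₁]`, `ε₂ = [ψ, B₂]`, `η = ψ ∘ I`, `δ = J ∘ ψ` for some endomorphism `ψ`
of `V`, then `ε₃ = [ψ, B₃]`. -/
theorem stmt4 (r n : ℕ) (hr : 1 ≤ r) (K : Type*) [Field K]
    (V : Type*) [AddCommGroup V] [Module K V] [FiniteDimensional K V]
    (hdim : Module.finrank K V = n)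
    (B₁ B₂ B₃ : V →ₗ[K] V) (I : (Fin r → K) →ₗ[K] V) (J : V →ₗ[K] (Fin r → K))
    (hADHM : B₁ ∘ₗ B₂ - B₂ ∘ₗ B₁ + I ∘ₗ J = 0)
    (hJ3 : J ∘ₗ B₃ = Ar K r ∘ₗ J)
    (h3I : B₃ ∘ₗ I = I ∘ₗ Ar K r)
    (h31 : B₃ ∘ₗ B₁ = B₁ ∘ₗ B₃)
    (h32 : B₃ ∘ₗ B₂ = B₂ ∘ₗ B₃)
    (hcyclic : ∀ W : Submodule K V,
        (∀ v ∈ W, B₁ v ∈ W) → (∀ v ∈ W, B₂ v ∈ W) → (∀ v ∈ W, B₃ v ∈ W) →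
        (∀ x, I x ∈ W) → W = ⊤)
    (ε₁ ε₂ ε₃ : V →ₗ[K] V) (η : (Fin r → K) →ₗ[K] V) (δ : V →ₗ[K] (Fin r → K))
    (hl1 : (ε₃ ∘ₗ B₁ - B₁ ∘ₗ ε₃) + (B₃ ∘ₗ ε₁ - ε₁ ∘ₗ B₃) = 0)
    (hl2 : (ε₃ ∘ₗ B₂ - B₂ ∘ₗ ε₃) + (B₃ ∘ₗ ε₂ - ε₂ ∘ₗ B₃) = 0)
    (hl3 : (ε₁ ∘ₗ B₂ - B₂ ∘ₗ ε₁) + (B₁ ∘ₗ ε₂ - ε₂ ∘ₗ B₁) + I ∘ₗ δ + η ∘ₗ J = 0)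
    (hl4 : B₃ ∘ₗ η + ε₃ ∘ₗ I - η ∘ₗ Ar K r = 0)
    (hl5 : δ ∘ₗ B₃ + J ∘ₗ ε₃ - Ar K r ∘ₗ δ = 0)
    (ψ : V →ₗ[K] V)
    (hψ1 : ε₁ = ψ ∘ₗ B₁ - B₁ ∘ₗ ψ)
    (hψ2 : ε₂ = ψ ∘ₗ B₂ - B₂ ∘ₗ ψ)
    (hψη : η = ψ ∘ₗ I)
    (hψδ : δ = J ∘ₗ ψ) :
    ε₃ = ψ ∘ₗ B₃ - B₃ ∘ₗ ψ :=
  stmt4_general r K V B₁ B₂ B₃ I h3I h31 h32 hcyclic ε₁ ε₂ ε₃ η hl1 hl2 hl4 ψ hψ1 hψ2 hψη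
end

section
/- Let r ≥ 1, let μ be a nested r-partition of n, and let λ be an r-partition of n+1 with μ_a ⊆ λ_a for every 1 ≤ a ≤ r. Assume λ is not nested. Then there is a unique index b with λ_b ≠ μ_b; it satisfies 2 ≤ b ≤ r, the difference λ_b \ μ_b consists of a single cell s, and S₁(λ) = {(b, b−1, s)} while S₂(λ) = ∅. -/
/-- A Young diagram, identified with a finite set of cells `s = (i(s), j(s))` in
`ℤ≥1 × ℤ≥1`: whenever `(i, j)` is a cell and `1 ≤ i' ≤ i`, `1 ≤ j' ≤ j`, then `(i', j')`
is also a cell. -/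
def IsYoung (ν : Finset (ℕ × ℕ)) : Prop :=
  (∀ c ∈ ν, 1 ≤ c.1 ∧ 1 ≤ c.2) ∧
    (∀ c ∈ ν, ∀ i' j' : ℕ, 1 ≤ i' → i' ≤ c.1 → 1 ≤ j' → j' ≤ c.2 → (i', j') ∈ ν)

/-- `ν_i`: the number of cells in column `i` of `ν`. -/
def colLen (ν : Finset (ℕ × ℕ)) (i : ℕ) : ℕ := (ν.filter (fun c => c.1 = i)).card

/-- `νᵗ_j`: the number of cells in row `j` of `ν`. -/
def rowLen (ν : Finset (ℕ × ℕ)) (j : ℕ) : ℕ := (ν.filter (fun c => c.2 = j)).card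

/-- The (possibly negative) leg `ℓ_ν(s) = ν_{i(s)} − j(s)`. -/
def leg (ν : Finset (ℕ × ℕ)) (s : ℕ × ℕ) : ℤ := (colLen ν s.1 : ℤ) - (s.2 : ℤ)

/-- The (possibly negative) arm `a_ν(s) = νᵗ_{j(s)} − i(s)`. -/
def arm (ν : Finset (ℕ × ℕ)) (s : ℕ × ℕ) : ℤ := (rowLen ν s.2 : ℤ) - (s.1 : ℤ)

/-- An `r`-partition `μ = (μ₁, …, μ_r)` (indexed by `Fin r`, with index `a : Fin r`
corresponding to `μ_{a+1}`) is nested if `μ_r ⊆ μ_{r−1} ⊆ … ⊆ μ₁`. -/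
def Nested {r : ℕ} (μ : Fin r → Finset (ℕ × ℕ)) : Prop :=
  ∀ a b : Fin r, a ≤ b → μ b ⊆ μ a

/-- The set `S₁(μ)` of triples `(b, c, s)` with `1 ≤ c < b ≤ r`, `s ∈ μ_b \ μ_c`,
`b − c + ℓ_{μ_c}(s) = 0` and `b − c − a_{μ_b}(s) − 1 = 0`. -/
def S1 {r : ℕ} (μ : Fin r → Finset (ℕ × ℕ)) : Set (Fin r × Fin r × (ℕ × ℕ)) :=
  {t | t.2.1 < t.1 ∧ t.2.2 ∈ μ t.1 ∧ t.2.2 ∉ μ t.2.1 ∧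
    ((t.1 : ℕ) : ℤ) - ((t.2.1 : ℕ) : ℤ) + leg (μ t.2.1) t.2.2 = 0 ∧
    ((t.1 : ℕ) : ℤ) - ((t.2.1 : ℕ) : ℤ) - arm (μ t.1) t.2.2 - 1 = 0}

/-- The set `S₂(μ)` of triples `(b, c, s)` with `1 ≤ b < c ≤ r`, `s ∈ μ_c \ μ_b`,
`b − c − ℓ_{μ_b}(s) − 1 = 0` and `b − c + a_{μ_c}(s) = 0`. -/
def S2 {r : ℕ} (μ : Fin r → Finset (ℕ × ℕ)) : Set (Fin r × Fin r × (ℕ × ℕ)) :=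
  {t | t.1 < t.2.1 ∧ t.2.2 ∈ μ t.2.1 ∧ t.2.2 ∉ μ t.1 ∧
    ((t.1 : ℕ) : ℤ) - ((t.2.1 : ℕ) : ℤ) - leg (μ t.1) t.2.2 - 1 = 0 ∧
    ((t.1 : ℕ) : ℤ) - ((t.2.1 : ℕ) : ℤ) + arm (μ t.2.1) t.2.2 = 0}

open Finset in
lemma rowLen_eq_of (ν : Finset (ℕ × ℕ)) (k m : ℕ)
    (hpos : ∀ c ∈ ν, 1 ≤ c.1)
    (hout : ∀ i, m < i → (i, k) ∉ ν)
    (hin : ∀ i, 1 ≤ i → i ≤ m → (i, k) ∈ ν) :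
    rowLen ν k = m := by
  have himg : ν.filter (fun c => c.2 = k) = (Finset.Icc 1 m).image (fun i => (i, k)) := by
    ext c
    simp only [Finset.mem_filter, Finset.mem_image, Finset.mem_Icc]
    constructor
    · rintro ⟨hc, hk⟩
      refine ⟨c.1, ⟨hpos c hc, ?_⟩, ?_⟩
      · by_contra h
        refine hout c.1 (Nat.lt_of_not_le h) ?_
        obtain ⟨i, j⟩ := c
        cases hk
        exact hc
      · obtain ⟨i, j⟩ := c
        cases hk
        rfl
    · rintro ⟨i, ⟨h1, h2⟩, rfl⟩
      exact ⟨hin i h1 h2, rfl⟩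
  rw [rowLen, himg, Finset.card_image_of_injective _ (fun a b h => by simpa using congrArg Prod.fst h),
    Nat.card_Icc]
  omega

open Finset in
lemma colLen_eq_of (ν : Finset (ℕ × ℕ)) (k m : ℕ)
    (hpos : ∀ c ∈ ν, 1 ≤ c.2)
    (hout : ∀ j, m < j → (k, j) ∉ ν)
    (hin : ∀ j, 1 ≤ j → j ≤ m → (k, j) ∈ ν) :
    colLen ν k = m := by
  have himg : ν.filter (fun c => c.1 = k) = (Finset.Icc 1 m).image (fun j => (k, j)) := by
    ext c
    simp only [Finset.mem_filter, Finset.mem_image, Finset.mem_Icc]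
    constructor
    · rintro ⟨hc, hk⟩
      refine ⟨c.2, ⟨hpos c hc, ?_⟩, ?_⟩
      · by_contra h
        refine hout c.2 (Nat.lt_of_not_le h) ?_
        obtain ⟨i, j⟩ := c
        cases hk
        exact hc
      · obtain ⟨i, j⟩ := c
        cases hk
        rfl
    · rintro ⟨j, ⟨h1, h2⟩, rfl⟩
      exact ⟨hin j h1 h2, rfl⟩
  rw [colLen, himg, Finset.card_image_of_injective _ (fun a b h => by simpa using congrArg Prod.snd h),
    Nat.card_Icc]
  omega

/-- Let `μ` be a nested `r`-partition of `n` and `λ` an `r`-partition of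
`n + 1` with `μ_a ⊆ λ_a` for all `a`, and suppose `λ` is not nested. Then there is a unique
index `b` with `λ_b ≠ μ_b`; it satisfies `2 ≤ b ≤ r` (i.e. there is an index `c` with
`c + 1 = b`), the difference `λ_b \ μ_b` is a single cell `s`, and
`S₁(λ) = {(b, b−1, s)}` while `S₂(λ) = ∅`. -/
theorem stmt9 (r n : ℕ) (hr : 1 ≤ r) (μ lam : Fin r → Finset (ℕ × ℕ))
    (hYμ : ∀ a, IsYoung (μ a)) (hYlam : ∀ a, IsYoung (lam a))
    (hμn : ∑ a, (μ a).card = n) (hlamn : ∑ a, (lam a).card = n + 1)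
    (hnest : Nested μ) (hsub : ∀ a, μ a ⊆ lam a) (hnot : ¬ Nested lam) :
    ∃ b c : Fin r, (c : ℕ) + 1 = (b : ℕ) ∧ lam b ≠ μ b ∧
      (∀ a, lam a ≠ μ a → a = b) ∧
      ∃ s : ℕ × ℕ, lam b \ μ b = {s} ∧
        S1 lam = {(b, c, s)} ∧ S2 lam = ∅ := by
    classical
  have hcard : ∀ a, (μ a).card ≤ (lam a).card := fun a => Finset.card_le_card (hsub a)
  set g : Fin r → ℕ := fun a => ((lam a) \ (μ a)).card with hg
  have hsplit : ∀ a, (lam a).card = (μ a).card + g a := by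
    intro a
    have h1 := Finset.card_sdiff_of_subset (hsub a)
    have h2 := hcard a
    simp only [hg]
    omega
  have hgsum : ∑ a, g a = 1 := by
    have : ∑ a, (lam a).card = ∑ a, ((μ a).card + g a) :=
      Finset.sum_congr rfl fun a _ => hsplit a
    rw [Finset.sum_add_distrib] at this
    omega
  have hbex : ∃ b, g b ≠ 0 := by
    by_contra h
    push_neg at h
    have : ∑ a, g a = 0 := Finset.sum_eq_zero fun a _ => h a
    omega
  obtain ⟨b, hb0⟩ := hbex
  have hb1 : g b = 1 := by
    have hle := Finset.single_le_sum (f := g) (fun a _ => Nat.zero_le _) (Finset.mem_univ b)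
    omega
  have hoth : ∀ a, a ≠ b → g a = 0 := by
    intro a ha
    have h2 : g a + g b ≤ ∑ x, g x := by
      calc g a + g b = ∑ x ∈ ({a, b} : Finset (Fin r)), g x := (Finset.sum_pair ha).symm
        _ ≤ ∑ x, g x := Finset.sum_le_sum_of_subset (Finset.subset_univ _)
    omega
  have heq : ∀ a, a ≠ b → lam a = μ a := by
    intro a ha
    exact Finset.Subset.antisymm
      (Finset.sdiff_eq_empty_iff_subset.1 (Finset.card_eq_zero.1 (hoth a ha))) (hsub a)
  obtain ⟨s, hs⟩ := Finset.card_eq_one.1 hb1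
  have hsmem : s ∈ lam b \ μ b := by rw [hs]; exact Finset.mem_singleton_self s
  have hsb : s ∈ lam b := (Finset.mem_sdiff.1 hsmem).1
  have hsnb : s ∉ μ b := (Finset.mem_sdiff.1 hsmem).2
  have hmem : ∀ t ∈ lam b, t ≠ s → t ∈ μ b := by
    intro t ht hts
    by_contra h
    have : t ∈ lam b \ μ b := Finset.mem_sdiff.2 ⟨ht, h⟩
    rw [hs, Finset.mem_singleton] at this
    exact hts this
  have hs1 : 1 ≤ s.1 := ((hYlam b).1 s hsb).1
  have hs2 : 1 ≤ s.2 := ((hYlam b).1 s hsb).2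
  -- non-nestedness gives an index A < b with s ∉ μ A
  have hA : ∃ A : Fin r, A < b ∧ s ∉ μ A := by
    rw [Nested] at hnot
    push_neg at hnot
    obtain ⟨A, B, hAB, hns⟩ := hnot
    rw [Finset.not_subset] at hns
    obtain ⟨t, htB, htA⟩ := hns
    have hBb : b = B := by
      by_contra h
      exact htA (hsub A (hnest A B hAB ((heq B (fun he => h he.symm)) ▸ htB)))
    subst hBb
    have hAb : A ≠ b := fun h => htA (h ▸ htB)
    have hts : s = t := by
      by_contra h
      exact htA (hsub A (hnest A b hAB (hmem t htB (fun he => h he.symm))))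
    subst hts
    refine ⟨A, lt_of_le_of_ne hAB hAb, fun h => htA (hsub A h)⟩
  obtain ⟨A, hAb, hsA⟩ := hA
  have hbpos : 1 ≤ (b : ℕ) := by
    have : (A : ℕ) < (b : ℕ) := hAb
    omega
  set c : Fin r := ⟨(b : ℕ) - 1, lt_of_le_of_lt (Nat.sub_le _ _) b.isLt⟩ with hcdef
  have hcb : (c : ℕ) + 1 = (b : ℕ) := by
    simp only [hcdef]
    omega
  have hc_lt : c < b := by
    rw [Fin.lt_def]
    omega
  have hcneb : c ≠ b := ne_of_lt hc_lt
  have hsc : s ∉ μ c := by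
    intro h
    refine hsA (hnest A c ?_ h)
    rw [Fin.le_def]
    have : (A : ℕ) < (b : ℕ) := hAb
    omega
  -- arm of s in lam b is 0
  have harm : rowLen (lam b) s.2 = s.1 := by
    apply rowLen_eq_of _ _ _ (fun t ht => ((hYlam b).1 t ht).1)
    · intro i hi hin'
      have hne : (i, s.2) ≠ s := by
        intro h
        have : i = s.1 := congrArg Prod.fst h
        omega
      have hμb : (i, s.2) ∈ μ b := hmem _ hin' hne
      have := (hYμ b).2 _ hμb s.1 s.2 hs1 (le_of_lt hi) hs2 le_rfl
      rw [Prod.mk.eta] at this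
      exact hsnb this
    · intro i h1 h2
      exact (hYlam b).2 s hsb i s.2 h1 h2 hs2 le_rfl
  have harmz : arm (lam b) s = 0 := by
    rw [arm, harm]
    ring
  -- column length of s.1 in μ c is s.2 - 1
  have hcol : colLen (μ c) s.1 = s.2 - 1 := by
    apply colLen_eq_of _ _ _ (fun t ht => ((hYμ c).1 t ht).2)
    · intro j hj hjin
      have : s ∈ μ c := by
        have := (hYμ c).2 _ hjin s.1 s.2 hs1 le_rfl hs2 (by omega)
        rwa [Prod.mk.eta] at this
      exact hsc this
    · intro j h1 h2
      have hjlam : (s.1, j) ∈ lam b := (hYlam b).2 s hsb s.1 j hs1 le_rfl h1 (by omega)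
      have hne : (s.1, j) ≠ s := by
        intro h
        have : j = s.2 := congrArg Prod.snd h
        omega
      exact hnest c b (le_of_lt hc_lt) (hmem _ hjlam hne)
  refine ⟨b, c, hcb, fun h => hsnb (h ▸ hsb), fun a ha => by_contra fun h => ha (heq a h),
    s, hs, ?_, ?_⟩
  · -- S1 lam = {(b, c, s)}
    ext ⟨B, C, t⟩
    simp only [S1, Set.mem_setOf_eq, Set.mem_singleton_iff, Prod.mk.injEq]
    constructor
    · rintro ⟨hCB, htB, htC, he1, he2⟩
      have hBb : b = B := by
        by_contra h
        exact htC (hsub C (hnest C B (le_of_lt hCB) ((heq B (fun he => h he.symm)) ▸ htB)))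
      subst hBb
      have hts : s = t := by
        by_contra h
        exact htC (hsub C (hnest C b (le_of_lt hCB) (hmem t htB (fun he => h he.symm))))
      subst hts
      rw [harmz] at he2
      have hCc : C = c := by
        apply Fin.ext
        simp only [hcdef]
        omega
      exact ⟨rfl, hCc, rfl⟩
    · rintro ⟨rfl, rfl, rfl⟩
      refine ⟨hc_lt, hsb, ?_, ?_, ?_⟩
      · rw [heq c hcneb]
        exact hsc
      · rw [leg, heq c hcneb, hcol]
        omega
      · rw [harmz]
        omega
  · -- S2 lam = ∅
    ext ⟨B, C, t⟩
    simp only [S2, Set.mem_setOf_eq, Set.mem_empty_iff_false, iff_false]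
    rintro ⟨hBC, htC, htB, he1, he2⟩
    have hCb : b = C := by
      by_contra h
      exact htB (hsub B (hnest B C (le_of_lt hBC) ((heq C (fun he => h he.symm)) ▸ htC)))
    subst hCb
    have hts : s = t := by
      by_contra h
      exact htB (hsub B (hnest B b (le_of_lt hBC) (hmem t htC (fun he => h he.symm))))
    subst hts
    have : (B : ℕ) < (b : ℕ) := hBC
    rw [harmz] at he2
    omega
end

section
/- Let r ≥ 1, let λ be a nested r-partition of n+1, and let μ be an r-partition of n with μ_a ⊆ λ_a for every 1 ≤ a ≤ r. Assume μ is not nested. Then there is a unique index d with μ_d ≠ λ_d; it satisfies 1 ≤ d ≤ r−1, the difference λ_d \ μ_d consists of a single cell u with u ∈ λ_{d+1}, and S₁(μ) = {(d+1, d, u)} while S₂(μ) = ∅. -/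
lemma young_mem_iff_col {ν : Finset (ℕ × ℕ)} (hν : IsYoung ν) (i j : ℕ) :
    (i, j) ∈ ν ↔ 1 ≤ j ∧ j ≤ colLen ν i := by
  classical
  set F := ν.filter (fun c => c.1 = i) with hF
  have hcardF : (F.image Prod.snd).card = F.card := by
    apply Finset.card_image_of_injOn
    intro c hc c' hc' h
    have h1 : c.1 = i := (Finset.mem_filter.mp hc).2
    have h2 : c'.1 = i := (Finset.mem_filter.mp hc').2
    exact Prod.ext (h1.trans h2.symm) h
  have himg : F.image Prod.snd = Finset.Icc 1 (colLen ν i) := by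
    have hdown : ∀ j' ∈ F.image Prod.snd, ∀ k, 1 ≤ k → k ≤ j' → k ∈ F.image Prod.snd := by
      intro j' hj' k hk1 hk2
      obtain ⟨c, hc, rfl⟩ := Finset.mem_image.mp hj'
      have hcν := Finset.mem_filter.mp hc
      have hik : (c.1, k) ∈ ν := hν.2 c hcν.1 c.1 k (hν.1 c hcν.1).1 le_rfl hk1 hk2
      exact Finset.mem_image.mpr ⟨(c.1, k), Finset.mem_filter.mpr ⟨hik, hcν.2⟩, rfl⟩
    apply Finset.eq_of_subset_of_card_le
    · intro j' hj'
      have h1 : 1 ≤ j' := by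
        obtain ⟨c, hc, rfl⟩ := Finset.mem_image.mp hj'
        exact (hν.1 c (Finset.mem_filter.mp hc).1).2
      have hsub : Finset.Icc 1 j' ⊆ F.image Prod.snd := fun k hk => by
        have := Finset.mem_Icc.mp hk
        exact hdown j' hj' k this.1 this.2
      have hle : j' ≤ (F.image Prod.snd).card := by
        calc j' = (Finset.Icc 1 j').card := by rw [Nat.card_Icc]; omega
        _ ≤ _ := Finset.card_le_card hsub
      rw [hcardF] at hle
      exact Finset.mem_Icc.mpr ⟨h1, hle⟩
    · rw [Nat.card_Icc, hcardF]
      have : F.card = colLen ν i := rfl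
      omega
  constructor
  · intro h
    have hm : j ∈ F.image Prod.snd :=
      Finset.mem_image.mpr ⟨(i, j), Finset.mem_filter.mpr ⟨h, rfl⟩, rfl⟩
    rw [himg] at hm
    exact Finset.mem_Icc.mp hm
  · intro h
    have hm : j ∈ F.image Prod.snd := by
      rw [himg]; exact Finset.mem_Icc.mpr h
    obtain ⟨c, hc, hcj⟩ := Finset.mem_image.mp hm
    have hcf := Finset.mem_filter.mp hc
    have hceq : c = (i, j) := Prod.ext hcf.2 hcj
    rw [← hceq]; exact hcf.1

lemma young_mem_iff_row {ν : Finset (ℕ × ℕ)} (hν : IsYoung ν) (i j : ℕ) :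
    (i, j) ∈ ν ↔ 1 ≤ i ∧ i ≤ rowLen ν j := by
  classical
  set F := ν.filter (fun c => c.2 = j) with hF
  have hcardF : (F.image Prod.fst).card = F.card := by
    apply Finset.card_image_of_injOn
    intro c hc c' hc' h
    have h1 : c.2 = j := (Finset.mem_filter.mp hc).2
    have h2 : c'.2 = j := (Finset.mem_filter.mp hc').2
    exact Prod.ext h (h1.trans h2.symm)
  have himg : F.image Prod.fst = Finset.Icc 1 (rowLen ν j) := by
    have hdown : ∀ i' ∈ F.image Prod.fst, ∀ k, 1 ≤ k → k ≤ i' → k ∈ F.image Prod.fst := by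
      intro i' hi' k hk1 hk2
      obtain ⟨c, hc, rfl⟩ := Finset.mem_image.mp hi'
      have hcν := Finset.mem_filter.mp hc
      have hik : (k, c.2) ∈ ν := hν.2 c hcν.1 k c.2 hk1 hk2 (hν.1 c hcν.1).2 le_rfl
      exact Finset.mem_image.mpr ⟨(k, c.2), Finset.mem_filter.mpr ⟨hik, hcν.2⟩, rfl⟩
    apply Finset.eq_of_subset_of_card_le
    · intro i' hi'
      have h1 : 1 ≤ i' := by
        obtain ⟨c, hc, rfl⟩ := Finset.mem_image.mp hi'
        exact (hν.1 c (Finset.mem_filter.mp hc).1).1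
      have hsub : Finset.Icc 1 i' ⊆ F.image Prod.fst := fun k hk => by
        have := Finset.mem_Icc.mp hk
        exact hdown i' hi' k this.1 this.2
      have hle : i' ≤ (F.image Prod.fst).card := by
        calc i' = (Finset.Icc 1 i').card := by rw [Nat.card_Icc]; omega
        _ ≤ _ := Finset.card_le_card hsub
      rw [hcardF] at hle
      exact Finset.mem_Icc.mpr ⟨h1, hle⟩
    · rw [Nat.card_Icc, hcardF]
      have : F.card = rowLen ν j := rfl
      omega
  constructor
  · intro h
    have hm : i ∈ F.image Prod.fst :=
      Finset.mem_image.mpr ⟨(i, j), Finset.mem_filter.mpr ⟨h, rfl⟩, rfl⟩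
    rw [himg] at hm
    exact Finset.mem_Icc.mp hm
  · intro h
    have hm : i ∈ F.image Prod.fst := by
      rw [himg]; exact Finset.mem_Icc.mpr h
    obtain ⟨c, hc, hci⟩ := Finset.mem_image.mp hm
    have hcf := Finset.mem_filter.mp hc
    have hceq : c = (i, j) := Prod.ext hci hcf.2
    rw [← hceq]; exact hcf.1

/-- Let `λ` be a nested `r`-partition of `n + 1` and `μ` an `r`-partition
of `n` with `μ_a ⊆ λ_a` for all `a`, and suppose `μ` is not nested. Then there is a unique
index `d` with `μ_d ≠ λ_d`; it satisfies `1 ≤ d ≤ r − 1` (i.e. there is an index `d'` with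
`d + 1 = d'`), the difference `λ_d \ μ_d` is a single cell `u` which lies in `λ_{d+1}`, and
`S₁(μ) = {(d+1, d, u)}` while `S₂(μ) = ∅`. -/
theorem stmt10 (r n : ℕ) (hr : 1 ≤ r) (μ lam : Fin r → Finset (ℕ × ℕ))
    (hYμ : ∀ a, IsYoung (μ a)) (hYlam : ∀ a, IsYoung (lam a))
    (hμn : ∑ a, (μ a).card = n) (hlamn : ∑ a, (lam a).card = n + 1)
    (hnest : Nested lam) (hsub : ∀ a, μ a ⊆ lam a) (hnot : ¬ Nested μ) :
    ∃ d d' : Fin r, (d : ℕ) + 1 = (d' : ℕ) ∧ μ d ≠ lam d ∧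
      (∀ a, μ a ≠ lam a → a = d) ∧
      ∃ u : ℕ × ℕ, lam d \ μ d = {u} ∧ u ∈ lam d' ∧
        S1 μ = {(d', d, u)} ∧ S2 μ = ∅ := by
  classical
  have hsum : ∑ a, ((lam a).card - (μ a).card) = 1 := by
    have h2 : ∑ a, (lam a).card = ∑ a, ((μ a).card + ((lam a).card - (μ a).card)) :=
      Finset.sum_congr rfl (fun a _ => by have := Finset.card_le_card (hsub a); omega)
    rw [Finset.sum_add_distrib, hμn, hlamn] at h2
    omega
  obtain ⟨d, hd0⟩ : ∃ d : Fin r, (lam d).card - (μ d).card ≠ 0 := by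
    by_contra h
    push_neg at h
    rw [Finset.sum_eq_zero (fun a _ => h a)] at hsum
    omega
  have herase : ∑ a ∈ Finset.univ.erase d, ((lam a).card - (μ a).card)
      + ((lam d).card - (μ d).card) = 1 := by
    rw [Finset.sum_erase_add _ _ (Finset.mem_univ d)]; exact hsum
  have hzero : ∀ a : Fin r, a ≠ d → (lam a).card - (μ a).card = 0 := by
    intro a ha
    have hle : (lam a).card - (μ a).card
        ≤ ∑ b ∈ Finset.univ.erase d, ((lam b).card - (μ b).card) :=
      Finset.single_le_sum (f := fun b => (lam b).card - (μ b).card)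
        (fun _ _ => Nat.zero_le _) (Finset.mem_erase.mpr ⟨ha, Finset.mem_univ a⟩)
    omega
  have heq : ∀ a : Fin r, a ≠ d → μ a = lam a := by
    intro a ha
    exact Finset.eq_of_subset_of_card_le (hsub a) (by have := hzero a ha; omega)
  have hdcard : (lam d).card = (μ d).card + 1 := by
    have := Finset.card_le_card (hsub d); omega
  obtain ⟨u, hu⟩ : ∃ u, lam d \ μ d = {u} := by
    rw [← Finset.card_eq_one, Finset.card_sdiff_of_subset (hsub d)]
    omega
  obtain ⟨i, j⟩ := u
  have hud : (i, j) ∈ lam d ∧ (i, j) ∉ μ d := by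
    have hm : (i, j) ∈ lam d \ μ d := hu ▸ Finset.mem_singleton_self (i, j)
    exact ⟨(Finset.mem_sdiff.mp hm).1, (Finset.mem_sdiff.mp hm).2⟩
  have hmem : ∀ s, s ∈ lam d → s ∉ μ d → s = (i, j) := by
    intro s h1 h2
    have hm : s ∈ lam d \ μ d := Finset.mem_sdiff.mpr ⟨h1, h2⟩
    rw [hu] at hm; exact Finset.mem_singleton.mp hm
  simp only [Nested] at hnot
  push_neg at hnot
  obtain ⟨a, b, hab, hns⟩ := hnot
  obtain ⟨s, hsb, hsa⟩ := Finset.not_subset.mp hns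
  have had : a = d := by
    by_contra h
    rw [heq a h] at hsa
    exact hsa (hnest a b hab (hsub b hsb))
  rw [had] at hab hsa
  have hdb : d < b := lt_of_le_of_ne hab (fun h => hsa (by rw [h]; exact hsb))
  have hsu : s = (i, j) := hmem s (hnest d b hdb.le (hsub b hsb)) hsa
  have hub : (i, j) ∈ lam b := hsu ▸ hsub b hsb
  have hdbn : (d : ℕ) < (b : ℕ) := hdb
  have hd'lt : (d : ℕ) + 1 < r := lt_of_le_of_lt hdbn b.isLt
  set d' : Fin r := ⟨(d : ℕ) + 1, hd'lt⟩ with hd'def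
  have hdd' : (d : ℕ) + 1 = (d' : ℕ) := rfl
  have hd'ne : d' ≠ d := by
    intro h
    have : (d' : ℕ) = (d : ℕ) := congrArg Fin.val h
    omega
  have hμd' : μ d' = lam d' := heq d' hd'ne
  have hd'b : d' ≤ b := by rw [Fin.le_def]; omega
  have hud'lam : (i, j) ∈ lam d' := hnest d' b hd'b hub
  have hud' : (i, j) ∈ μ d' := by rw [hμd']; exact hud'lam
  obtain ⟨hi1, hj1⟩ := (hYlam d).1 (i, j) hud.1
  -- leg of (i,j) in μ d is -1
  have hcol : colLen (μ d) i = j - 1 := by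
    have hupper : ¬ (1 ≤ j ∧ j ≤ colLen (μ d) i) := by
      intro h
      exact hud.2 ((young_mem_iff_col (hYμ d) i j).mpr h)
    have hlow : j ≤ 1 ∨ j - 1 ≤ colLen (μ d) i := by
      by_cases h : j ≤ 1
      · exact Or.inl h
      · right
        have hm2 : (i, j - 1) ∈ lam d :=
          (hYlam d).2 (i, j) hud.1 i (j - 1) hi1 le_rfl (by omega) (by omega)
        have hm3 : (i, j - 1) ∈ μ d := by
          by_contra hn
          have := hmem (i, j - 1) hm2 hn
          have : j - 1 = j := congrArg Prod.snd this
          omega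
        exact ((young_mem_iff_col (hYμ d) i (j - 1)).mp hm3).2
    omega
  have hleg : leg (μ d) (i, j) = -1 := by
    simp only [leg]
    rw [hcol]
    omega
  -- arm of (i,j) in μ d' is 0
  have hrow : rowLen (μ d') j = i := by
    have h1 : i ≤ rowLen (μ d') j := ((young_mem_iff_row (hYμ d') i j).mp hud').2
    have h2 : ¬ (1 ≤ i + 1 ∧ i + 1 ≤ rowLen (μ d') j) := by
      intro h
      have hm : (i + 1, j) ∈ μ d' := (young_mem_iff_row (hYμ d') (i + 1) j).mpr h
      rw [hμd'] at hm
      have hdled' : d ≤ d' := by rw [Fin.le_def]; omega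
      have hm2 : (i + 1, j) ∈ lam d := hnest d d' hdled' hm
      have hm3 : (i + 1, j) ∈ μ d := by
        by_contra hn
        have := hmem (i + 1, j) hm2 hn
        have : i + 1 = i := congrArg Prod.fst this
        omega
      exact hud.2 ((hYμ d).2 (i + 1, j) hm3 i j hi1 (by omega) hj1 le_rfl)
    omega
  have harm : arm (μ d') (i, j) = 0 := by
    simp only [arm]
    rw [hrow]
    omega
  refine ⟨d, d', hdd', ?_, ?_, (i, j), hu, hud'lam, ?_, ?_⟩
  · intro h; rw [h] at hdcard; omega
  · intro a ha; by_contra h; exact ha (heq a h)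
  · ext ⟨b', c', s'⟩
    simp only [S1, Set.mem_setOf_eq, Set.mem_singleton_iff, Prod.mk.injEq]
    constructor
    · rintro ⟨hcb, hsb', hsc', hlegc, harmb⟩
      have hcd : c' = d := by
        by_contra h
        rw [heq c' h] at hsc'
        exact hsc' (hnest c' b' hcb.le (hsub b' hsb'))
      rw [hcd] at hsc' hlegc hcb
      have hsu' : s' = (i, j) := hmem s' (hnest d b' hcb.le (hsub b' hsb')) hsc'
      subst hsu'
      rw [hleg] at hlegc
      refine ⟨Fin.ext ?_, hcd, rfl⟩
      omega
    · rintro ⟨rfl, rfl, rfl⟩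
      refine ⟨?_, hud', hud.2, ?_, ?_⟩
      · rw [Fin.lt_def]; omega
      · rw [hleg]; omega
      · rw [harm]; omega
  · rw [Set.eq_empty_iff_forall_notMem]
    rintro ⟨b', c', s'⟩ ⟨hbc, hsc2, hsb2, hleg2, harm2⟩
    have hbd : b' = d := by
      by_contra h
      rw [heq b' h] at hsb2
      exact hsb2 (hnest b' c' hbc.le (hsub c' hsc2))
    rw [hbd] at hsb2 hleg2 hbc
    have hsu2 : s' = (i, j) := hmem s' (hnest d c' hbc.le (hsub c' hsc2)) hsb2
    subst hsu2
    rw [hleg] at hleg2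
    have hdc : (d : ℕ) < (c' : ℕ) := hbc
    omega
end

section
/- Let r ≥ 1 and let μ, λ be r-partitions of n and n+1 respectively with μ_a ⊆ λ_a for every 1 ≤ a ≤ r. If μ is nested or λ is nested, then S₁(μ,λ) = ∅ and S₂(μ,λ) = ∅. -/
/-- For a pair `μ ⊆ λ` of `r`-partitions of `n` and `n + 1` with `λ_d \ μ_d = {u}` at the
unique differing index `d`, the set `S₁(μ, λ)` of triples `(b, c, s)` with `s ∈ λ_b`,
`(b, s) ≠ (d, u)`, `b − c + ℓ_{λ_c}(s) = 0` and `b − c − a_{μ_b}(s) − 1 = 0`. -/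
def S1p {r : ℕ} (μ lam : Fin r → Finset (ℕ × ℕ)) (d : Fin r) (u : ℕ × ℕ) :
    Set (Fin r × Fin r × (ℕ × ℕ)) :=
  {t | t.2.2 ∈ lam t.1 ∧ (t.1, t.2.2) ≠ (d, u) ∧
    ((t.1 : ℕ) : ℤ) - ((t.2.1 : ℕ) : ℤ) + leg (lam t.2.1) t.2.2 = 0 ∧
    ((t.1 : ℕ) : ℤ) - ((t.2.1 : ℕ) : ℤ) - arm (μ t.1) t.2.2 - 1 = 0}

/-- For a pair `μ ⊆ λ` of `r`-partitions of `n` and `n + 1`, the set `S₂(μ, λ)` of triples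
`(b, c, s)` with `s ∈ μ_c`, `b − c − ℓ_{μ_b}(s) − 1 = 0` and `b − c + a_{λ_c}(s) = 0`. -/
def S2p {r : ℕ} (μ lam : Fin r → Finset (ℕ × ℕ)) :
    Set (Fin r × Fin r × (ℕ × ℕ)) :=
  {t | t.2.2 ∈ μ t.2.1 ∧
    ((t.1 : ℕ) : ℤ) - ((t.2.1 : ℕ) : ℤ) - leg (μ t.1) t.2.2 - 1 = 0 ∧
    ((t.1 : ℕ) : ℤ) - ((t.2.1 : ℕ) : ℤ) + arm (lam t.2.1) t.2.2 = 0}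

lemma mem_iff_le_colLen {ν : Finset (ℕ × ℕ)} (hν : IsYoung ν) {i j : ℕ} (hj : 1 ≤ j) :
    (i, j) ∈ ν ↔ j ≤ colLen ν i := by
  constructor
  · intro h
    have hi : 1 ≤ i := (hν.1 _ h).1
    have hsub : (Finset.Icc 1 j).image (fun j' => (i, j')) ⊆ ν.filter (fun c => c.1 = i) := by
      intro c hc
      simp only [Finset.mem_image, Finset.mem_Icc] at hc
      obtain ⟨j', ⟨h1, h2⟩, rfl⟩ := hc
      exact Finset.mem_filter.mpr ⟨hν.2 _ h i j' hi le_rfl h1 h2, rfl⟩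
    have hcard := Finset.card_le_card hsub
    rwa [Finset.card_image_of_injective _ (fun a b hab => by simpa using hab),
      Nat.card_Icc, Nat.add_sub_cancel] at hcard
  · intro h
    have hpos : 0 < colLen ν i := lt_of_lt_of_le hj h
    have hne : (ν.filter (fun c => c.1 = i)).Nonempty := Finset.card_pos.mp hpos
    obtain ⟨b, hb, hmax⟩ := Finset.exists_max_image _ Prod.snd hne
    have hb' := Finset.mem_filter.mp hb
    have hsub : ν.filter (fun c => c.1 = i) ⊆ (Finset.Icc 1 b.2).image (fun j' => (i, j')) := by
      intro c hc
      have hc' := Finset.mem_filter.mp hc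
      simp only [Finset.mem_image, Finset.mem_Icc]
      exact ⟨c.2, ⟨(hν.1 _ hc'.1).2, hmax _ hc⟩, by rw [← hc'.2]⟩
    have hcard := Finset.card_le_card hsub
    rw [Finset.card_image_of_injective _ (fun a b hab => by simpa using hab),
      Nat.card_Icc, Nat.add_sub_cancel] at hcard
    have hjb : j ≤ b.2 := le_trans h hcard
    have := hν.2 _ hb'.1 i j (hb'.2 ▸ (hν.1 _ hb'.1).1) (le_of_eq hb'.2.symm) hj hjb
    exact this

lemma mem_iff_le_rowLen {ν : Finset (ℕ × ℕ)} (hν : IsYoung ν) {i j : ℕ} (hi : 1 ≤ i) :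
    (i, j) ∈ ν ↔ i ≤ rowLen ν j := by
  constructor
  · intro h
    have hj : 1 ≤ j := (hν.1 _ h).2
    have hsub : (Finset.Icc 1 i).image (fun i' => (i', j)) ⊆ ν.filter (fun c => c.2 = j) := by
      intro c hc
      simp only [Finset.mem_image, Finset.mem_Icc] at hc
      obtain ⟨i', ⟨h1, h2⟩, rfl⟩ := hc
      exact Finset.mem_filter.mpr ⟨hν.2 _ h i' j h1 h2 hj le_rfl, rfl⟩
    have hcard := Finset.card_le_card hsub
    rwa [Finset.card_image_of_injective _ (fun a b hab => by simpa using hab),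
      Nat.card_Icc, Nat.add_sub_cancel] at hcard
  · intro h
    have hpos : 0 < rowLen ν j := lt_of_lt_of_le hi h
    have hne : (ν.filter (fun c => c.2 = j)).Nonempty := Finset.card_pos.mp hpos
    obtain ⟨b, hb, hmax⟩ := Finset.exists_max_image _ Prod.fst hne
    have hb' := Finset.mem_filter.mp hb
    have hsub : ν.filter (fun c => c.2 = j) ⊆ (Finset.Icc 1 b.1).image (fun i' => (i', j)) := by
      intro c hc
      have hc' := Finset.mem_filter.mp hc
      simp only [Finset.mem_image, Finset.mem_Icc]
      exact ⟨c.1, ⟨(hν.1 _ hc'.1).1, hmax _ hc⟩, by rw [← hc'.2]⟩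
    have hcard := Finset.card_le_card hsub
    rw [Finset.card_image_of_injective _ (fun a b hab => by simpa using hab),
      Nat.card_Icc, Nat.add_sub_cancel] at hcard
    have hib : i ≤ b.1 := le_trans h hcard
    exact hν.2 _ hb'.1 i j hi hib (hb'.2 ▸ (hν.1 _ hb'.1).2) (le_of_eq hb'.2.symm)
lemma mk_eta (s : ℕ × ℕ) : (s.1, s.2) = s := rfl


/-- Let `μ ⊆ λ` be `r`-partitions of `n` and `n + 1`. If `μ` is nested or
`λ` is nested, then `S₁(μ, λ) = ∅` and `S₂(μ, λ) = ∅`. -/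
theorem stmt11 (r n : ℕ) (hr : 1 ≤ r) (μ lam : Fin r → Finset (ℕ × ℕ))
    (hYμ : ∀ a, IsYoung (μ a)) (hYlam : ∀ a, IsYoung (lam a))
    (hμn : ∑ a, (μ a).card = n) (hlamn : ∑ a, (lam a).card = n + 1)
    (hsub : ∀ a, μ a ⊆ lam a)
    (d : Fin r) (u : ℕ × ℕ) (hd : lam d \ μ d = {u})
    (h : Nested μ ∨ Nested lam) :
    S1p μ lam d u = ∅ ∧ S2p μ lam = ∅ := by

  -- basic facts about u
  have hu : u ∈ lam d ∧ u ∉ μ d := by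
    have : u ∈ lam d \ μ d := by rw [hd]; exact Finset.mem_singleton_self u
    exact ⟨(Finset.mem_sdiff.mp this).1, (Finset.mem_sdiff.mp this).2⟩
  have hu1 : 1 ≤ u.1 := ((hYlam d).1 u hu.1).1
  have hu2 : 1 ≤ u.2 := ((hYlam d).1 u hu.1).2
  -- cardinal of lam d
  have hcardd : (lam d).card = (μ d).card + 1 := by
    have h1 : (lam d \ μ d).card = 1 := by rw [hd]; simp
    have := Finset.card_sdiff_add_card_eq_card (hsub d)
    omega
  -- lam a = μ a for a ≠ d
  have heqa : ∀ a : Fin r, a ≠ d → lam a = μ a := by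
    have hsum : ∑ a ∈ Finset.univ.erase d, (lam a).card
        = ∑ a ∈ Finset.univ.erase d, (μ a).card := by
      have h1 : ∑ a ∈ Finset.univ.erase d, (lam a).card + (lam d).card
          = ∑ a, (lam a).card :=
        Finset.sum_erase_add Finset.univ _ (Finset.mem_univ d)
      have h2 : ∑ a ∈ Finset.univ.erase d, (μ a).card + (μ d).card
          = ∑ a, (μ a).card :=
        Finset.sum_erase_add Finset.univ _ (Finset.mem_univ d)
      omega
    have hle : ∀ a ∈ Finset.univ.erase d, (μ a).card ≤ (lam a).card :=
      fun a _ => Finset.card_le_card (hsub a)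
    have := (Finset.sum_eq_sum_iff_of_le hle).mp hsum.symm
    intro a ha
    exact (Finset.eq_of_subset_of_card_le (hsub a)
      (le_of_eq ((this a (Finset.mem_erase.mpr ⟨ha, Finset.mem_univ a⟩)).symm))).symm
  -- key fact: the only cell of lam \ μ is (d, u)
  have hkey : ∀ (a : Fin r) (s : ℕ × ℕ), s ∈ lam a → s ∉ μ a → a = d ∧ s = u := by
    intro a s hsl hsm
    by_cases had : a = d
    · subst had
      have : s ∈ lam a \ μ a := Finset.mem_sdiff.mpr ⟨hsl, hsm⟩
      rw [hd] at this
      exact ⟨rfl, Finset.mem_singleton.mp this⟩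
    · rw [heqa a had] at hsl; exact absurd hsl hsm
  -- u is an addable corner of μ d
  have hcorner : colLen (μ d) u.1 = u.2 - 1 := by
    have hub : ¬ u.2 ≤ colLen (μ d) u.1 := by
      intro hle
      exact hu.2 (mk_eta u ▸ (mem_iff_le_colLen (hYμ d) hu2).mpr hle)
    rcases Nat.lt_or_ge u.2 2 with h2 | h2
    · omega
    · have hmem : (u.1, u.2 - 1) ∈ lam d :=
        (hYlam d).2 u hu.1 u.1 (u.2 - 1) hu1 le_rfl (by omega) (by omega)
      have hmemμ : (u.1, u.2 - 1) ∈ μ d := by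
        by_contra hc
        have : (u.1, u.2 - 1) ∈ lam d \ μ d := Finset.mem_sdiff.mpr ⟨hmem, hc⟩
        rw [hd, Finset.mem_singleton] at this
        have := congrArg Prod.snd this
        simp at this
        omega
      have := (mem_iff_le_colLen (hYμ d) (by omega : 1 ≤ u.2 - 1)).mp hmemμ
      omega
  constructor
  · apply Set.eq_empty_iff_forall_notMem.mpr
    rintro ⟨b, c, i, j⟩ ht
    simp only [S1p, Set.mem_setOf_eq, leg, arm] at ht
    obtain ⟨hs, hne, e1, e2⟩ := ht
    have hi : 1 ≤ i := ((hYlam b).1 _ hs).1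
    have hj : 1 ≤ j := ((hYlam b).1 _ hs).2
    by_cases hBc : (b : ℕ) ≤ (c : ℕ)
    · -- B ≤ 0 : s ∈ lam b \ μ b forces (b, s) = (d, u)
      have hnotμ : (i, j) ∉ μ b := by
        intro hm
        have := (mem_iff_le_rowLen (hYμ b) hi).mp hm
        omega
      obtain ⟨hbd, hsu⟩ := hkey b (i, j) hs hnotμ
      exact hne (by rw [hbd, hsu])
    · -- B ≥ 1
      have hμb : (i, j) ∈ μ b := by
        apply (mem_iff_le_rowLen (hYμ b) hi).mpr
        omega
      have hnotc : (i, j) ∉ lam c := by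
        intro hm
        have := (mem_iff_le_colLen (hYlam c) hj).mp hm
        omega
      have hcb : c ≤ b := Fin.le_def.mpr (by omega)
      rcases h with hN | hN
      · exact hnotc (hsub c (hN c b hcb hμb))
      · exact hnotc (hN c b hcb (hsub b hμb))
  · apply Set.eq_empty_iff_forall_notMem.mpr
    rintro ⟨b, c, i, j⟩ ht
    simp only [S2p, Set.mem_setOf_eq, leg, arm] at ht
    obtain ⟨hs, e1, e2⟩ := ht
    have hi : 1 ≤ i := ((hYμ c).1 _ hs).1
    have hj : 1 ≤ j := ((hYμ c).1 _ hs).2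
    by_cases hBc : (c : ℕ) < (b : ℕ)
    · -- B ≥ 1 : s ∉ lam c, contradiction with s ∈ μ c ⊆ lam c
      have := (mem_iff_le_rowLen (hYlam c) hi).mp (hsub c hs)
      omega
    · -- B ≤ 0
      have hnotμb : (i, j) ∉ μ b := by
        intro hm
        have := (mem_iff_le_colLen (hYμ b) hj).mp hm
        omega
      have hbc : b ≤ c := Fin.le_def.mpr (by omega)
      rcases h with hN | hN
      · exact hnotμb (hN b c hbc hs)
      · have hlamb : (i, j) ∈ lam b := hN b c hbc (hsub c hs)
        obtain ⟨hbd, hsu⟩ := hkey b (i, j) hlamb hnotμb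
        have hui : u.1 = i := by rw [← hsu]
        have huj : u.2 = j := by rw [← hsu]
        have hcol : colLen (μ b) i = j - 1 := by rw [hbd, ← hui, ← huj]; exact hcorner
        have hbceq : b = c := Fin.val_injective (by omega)
        rw [← hbceq] at hs
        exact hnotμb hs
end

section
/- Let r ≥ 1 and let μ, λ be r-partitions of n and n+1 respectively with μ_a ⊆ λ_a for every 1 ≤ a ≤ r. Then every triple (b,c,s) ∈ S₁(μ,λ) satisfies b ≥ c+1, s ∈ μ_b and s ∉ λ_c. -/

lemma col_le {ν : Finset (ℕ × ℕ)} (hY : IsYoung ν) {s : ℕ × ℕ} (hs : s ∈ ν) :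
    s.2 ≤ colLen ν s.1 := by
  have h1 := hY.1 s hs
  have key : (Finset.Icc 1 s.2).image (fun j => (s.1, j)) ⊆
      ν.filter (fun c => c.1 = s.1) := by
    intro c hc
    simp only [Finset.mem_image, Finset.mem_Icc] at hc
    obtain ⟨j, ⟨hj1, hj2⟩, rfl⟩ := hc
    exact Finset.mem_filter.mpr ⟨hY.2 s hs s.1 j h1.1 le_rfl hj1 hj2, rfl⟩
  have hcard := Finset.card_le_card key
  rw [Finset.card_image_of_injective _ (fun a b h => by simpa using h),
    Nat.card_Icc] at hcard
  simpa [colLen] using hcard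

lemma row_le {ν : Finset (ℕ × ℕ)} (hY : IsYoung ν) {s : ℕ × ℕ} (hs : s ∈ ν) :
    s.1 ≤ rowLen ν s.2 := by
  have h1 := hY.1 s hs
  have key : (Finset.Icc 1 s.1).image (fun i => (i, s.2)) ⊆
      ν.filter (fun c => c.2 = s.2) := by
    intro c hc
    simp only [Finset.mem_image, Finset.mem_Icc] at hc
    obtain ⟨i, ⟨hi1, hi2⟩, rfl⟩ := hc
    exact Finset.mem_filter.mpr ⟨hY.2 s hs i s.2 hi1 hi2 h1.2 le_rfl, rfl⟩
  have hcard := Finset.card_le_card key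
  rw [Finset.card_image_of_injective _ (fun a b h => by simpa using h),
    Nat.card_Icc] at hcard
  simpa [rowLen] using hcard

/-- Let `μ ⊆ λ` be `r`-partitions of `n` and `n + 1`. Then every triple
`(b, c, s) ∈ S₁(μ, λ)` satisfies `b ≥ c + 1`, `s ∈ μ_b` and `s ∉ λ_c`. -/
theorem stmt13 (r n : ℕ) (hr : 1 ≤ r) (μ lam : Fin r → Finset (ℕ × ℕ))
    (hYμ : ∀ a, IsYoung (μ a)) (hYlam : ∀ a, IsYoung (lam a))
    (hμn : ∑ a, (μ a).card = n) (hlamn : ∑ a, (lam a).card = n + 1)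
    (hsub : ∀ a, μ a ⊆ lam a)
    (d : Fin r) (u : ℕ × ℕ) (hd : lam d \ μ d = {u}) :
    ∀ b c : Fin r, ∀ s : ℕ × ℕ, (b, c, s) ∈ S1p μ lam d u →
      c < b ∧ s ∈ μ b ∧ s ∉ lam c := by
  intro b c s hmem
  obtain ⟨hsb, hne, h1, h2⟩ := hmem
  -- total cardinality of differences is 1
  have hcardeq : ∀ a, (lam a).card = (μ a).card + (lam a \ μ a).card := by
    intro a
    have := Finset.card_sdiff_of_subset (hsub a)
    have hle := Finset.card_le_card (hsub a)
    omega
  have hsum : ∑ a, ((μ a).card + (lam a \ μ a).card) = n + 1 := by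
    rw [← hlamn]; exact Finset.sum_congr rfl fun a _ => (hcardeq a).symm
  rw [Finset.sum_add_distrib, hμn] at hsum
  have hsumdiff : ∑ a, (lam a \ μ a).card = 1 := by omega
  have hcd : (lam d \ μ d).card = 1 := by rw [hd]; simp
  have hzero : ∀ a, a ≠ d → (lam a \ μ a).card = 0 := by
    intro a ha
    have hsplit := Finset.add_sum_erase Finset.univ (fun a => (lam a \ μ a).card)
      (Finset.mem_univ d)
    have hsplit' : (lam d \ μ d).card + ∑ x ∈ Finset.univ.erase d, (lam x \ μ x).card = 1 := by
      rw [hsumdiff] at hsplit; exact hsplit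
    have h0 : ∑ x ∈ Finset.univ.erase d, (lam x \ μ x).card = 0 := by omega
    exact Finset.sum_eq_zero_iff.mp h0 a (Finset.mem_erase.mpr ⟨ha, Finset.mem_univ a⟩)
  -- s ∈ μ b
  have hsμ : s ∈ μ b := by
    by_cases hbd : b = d
    · subst hbd
      by_contra hns
      have : s ∈ lam b \ μ b := Finset.mem_sdiff.mpr ⟨hsb, hns⟩
      rw [hd] at this
      have hsu : s = u := Finset.mem_singleton.mp this
      exact hne (by rw [hsu])
    · by_contra hns
      have : s ∈ lam b \ μ b := Finset.mem_sdiff.mpr ⟨hsb, hns⟩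
      have := Finset.card_pos.mpr ⟨s, this⟩
      have := hzero b hbd
      omega
  -- c < b
  have hrow := row_le (hYμ b) hsμ
  have hcb : (c : ℕ) < (b : ℕ) := by
    simp only [arm] at h2
    omega
  refine ⟨hcb, hsμ, ?_⟩
  -- s ∉ lam c
  intro hsc
  have hcol := col_le (hYlam c) hsc
  simp only [leg] at h1
  omega
end

section
/- Let r ≥ 1 and let μ, λ be r-partitions of n and n+1 respectively with μ_a ⊆ λ_a for every 1 ≤ a ≤ r. Then every triple (b,c,s) ∈ S₂(μ,λ) satisfies c ≥ b+1, a_{λ_c}(s) ≥ 1, ℓ_{μ_b}(s) ≤ −2 and s ∉ μ_b. -/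
/-! A cell of a Young diagram has nonnegative arm and leg there. Since `s ∈ μ_c ⊆ λ_c`, the arm
condition `a_{λ_c}(s) = c − b ≥ 0` gives `b ≤ c`; if `b = c`, the leg condition would give
`ℓ_{μ_b}(s) = −1` for the cell `s ∈ μ_b`. Hence `b < c`, and then `ℓ_{μ_b}(s) = b − c − 1 < 0`
excludes `s` from `μ_b`. -/

namespace IsYoung

variable {ν : Finset (ℕ × ℕ)} {s : ℕ × ℕ}

theorem le_colLen (hY : IsYoung ν) (hs : s ∈ ν) : s.2 ≤ colLen ν s.1 := by
  have hcol : (Finset.Icc 1 s.2).card ≤ (ν.filter (fun c => c.1 = s.1)).card := by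
    refine Finset.card_le_card_of_injOn (fun j => (s.1, j)) (fun j hj => ?_)
      (fun _ _ _ _ h => (Prod.mk.inj h).2)
    obtain ⟨hj₁, hj₂⟩ := Finset.mem_Icc.mp hj
    exact Finset.mem_filter.mpr ⟨hY.2 s hs s.1 j (hY.1 s hs).1 le_rfl hj₁ hj₂, rfl⟩
  simpa [colLen] using hcol

theorem le_rowLen (hY : IsYoung ν) (hs : s ∈ ν) : s.1 ≤ rowLen ν s.2 := by
  have hrow : (Finset.Icc 1 s.1).card ≤ (ν.filter (fun c => c.2 = s.2)).card := by
    refine Finset.card_le_card_of_injOn (fun i => (i, s.2)) (fun i hi => ?_)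
      (fun _ _ _ _ h => (Prod.mk.inj h).1)
    obtain ⟨hi₁, hi₂⟩ := Finset.mem_Icc.mp hi
    exact Finset.mem_filter.mpr ⟨hY.2 s hs i s.2 hi₁ hi₂ (hY.1 s hs).2 le_rfl, rfl⟩
  simpa [rowLen] using hrow

theorem leg_nonneg (hY : IsYoung ν) (hs : s ∈ ν) : 0 ≤ leg ν s := by
  have := hY.le_colLen hs
  unfold leg
  omega

theorem arm_nonneg (hY : IsYoung ν) (hs : s ∈ ν) : 0 ≤ arm ν s := by
  have := hY.le_rowLen hs
  unfold arm
  omega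

theorem notMem_of_leg_neg (hY : IsYoung ν) (hleg : leg ν s < 0) : s ∉ ν :=
  fun hs => (hleg.trans_le (hY.leg_nonneg hs)).false

end IsYoung

theorem stmt14_general (r : ℕ) (μ lam : Fin r → Finset (ℕ × ℕ))
    (hYμ : ∀ a, IsYoung (μ a)) (hYlam : ∀ a, IsYoung (lam a))
    (hsub : ∀ a, μ a ⊆ lam a) :
    ∀ b c : Fin r, ∀ s : ℕ × ℕ, (b, c, s) ∈ S2p μ lam →
      b < c ∧ 1 ≤ arm (lam c) s ∧ leg (μ b) s ≤ -2 ∧ s ∉ μ b := by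
  rintro b c s ⟨hs, hleg, harm⟩
  dsimp only at hs hleg harm
  have hbc : b ≤ c := by
    have := (hYlam c).arm_nonneg (hsub c hs)
    rw [Fin.le_iff_val_le_val]
    omega
  have hne : b ≠ c := by
    rintro rfl
    exact (hYμ b).notMem_of_leg_neg (by omega) hs
  have hlt : b < c := lt_of_le_of_ne hbc hne
  have hlt' : (b : ℕ) < c := Fin.lt_def.mp hlt
  exact ⟨hlt, by omega, by omega, (hYμ b).notMem_of_leg_neg (by omega)⟩

/-- Let `μ ⊆ λ` be `r`-partitions of `n` and `n + 1`. Then every triple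
`(b, c, s) ∈ S₂(μ, λ)` satisfies `c ≥ b + 1`, `a_{λ_c}(s) ≥ 1`, `ℓ_{μ_b}(s) ≤ −2` and
`s ∉ μ_b`. -/
theorem stmt14 (r n : ℕ) (hr : 1 ≤ r) (μ lam : Fin r → Finset (ℕ × ℕ))
    (hYμ : ∀ a, IsYoung (μ a)) (hYlam : ∀ a, IsYoung (lam a))
    (hμn : ∑ a, (μ a).card = n) (hlamn : ∑ a, (lam a).card = n + 1)
    (hsub : ∀ a, μ a ⊆ lam a)
    (d : Fin r) (u : ℕ × ℕ) (hd : lam d \ μ d = {u}) :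
    ∀ b c : Fin r, ∀ s : ℕ × ℕ, (b, c, s) ∈ S2p μ lam →
      b < c ∧ 1 ≤ arm (lam c) s ∧ leg (μ b) s ≤ -2 ∧ s ∉ μ b :=
  stmt14_general r μ lam hYμ hYlam hsub
end

section
/- Let r ≥ 1 and let μ and λ be nested r-partitions of n. If the multiset of points of ℤ × ℤ given by {(i(s) − a, j(s) − a) : 1 ≤ a ≤ r, s ∈ μ_a} (counted with multiplicity) equals the multiset {(i(s) − a, j(s) − a) : 1 ≤ a ≤ r, s ∈ λ_a}, then μ_a = λ_a for every 1 ≤ a ≤ r. -/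
/-- The multiset of shifted cells `{(i(s) − a, j(s) − a) : 1 ≤ a ≤ r, s ∈ μ_a}` of an
`r`-partition `μ` (the index `a : Fin r` corresponds to the 1-indexed `a + 1`). -/
def shiftedCells {r : ℕ} (μ : Fin r → Finset (ℕ × ℕ)) : Multiset (ℤ × ℤ) :=
  ∑ a : Fin r, (μ a).val.map
    (fun s => ((s.1 : ℤ) - ((a : ℕ) + 1 : ℤ), (s.2 : ℤ) - ((a : ℕ) + 1 : ℤ)))

def PP {r : ℕ} (μ : Fin r → Finset (ℕ × ℕ)) (p : ℤ × ℤ) (a : Fin r) : Prop :=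
  ∃ s ∈ μ a, p = ((s.1 : ℤ) - ((a : ℕ) + 1 : ℤ), (s.2 : ℤ) - ((a : ℕ) + 1 : ℤ))

instance {r : ℕ} (μ : Fin r → Finset (ℕ × ℕ)) (p : ℤ × ℤ) (a : Fin r) :
    Decidable (PP μ p a) := by unfold PP; infer_instance

lemma count_shifted {r : ℕ} (μ : Fin r → Finset (ℕ × ℕ)) (p : ℤ × ℤ) :
    Multiset.count p (shiftedCells μ) =
      (Finset.univ.filter (fun a => PP μ p a)).card := by
  rw [shiftedCells, Multiset.count_sum', Finset.card_filter]
  refine Finset.sum_congr rfl fun a _ => ?_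
  rw [Multiset.count_map]
  have : (Multiset.filter
      (fun s => p = ((s.1 : ℤ) - ((a : ℕ) + 1 : ℤ), (s.2 : ℤ) - ((a : ℕ) + 1 : ℤ)))
      (μ a).val).card =
      ((μ a).filter
      (fun s => p = ((s.1 : ℤ) - ((a : ℕ) + 1 : ℤ), (s.2 : ℤ) - ((a : ℕ) + 1 : ℤ)))).card := rfl
  rw [this]
  split_ifs with hex
  · obtain ⟨s0, hs0, hps0⟩ := hex
    rw [Finset.card_eq_one]
    refine ⟨s0, ?_⟩
    ext x
    simp only [Finset.mem_filter, Finset.mem_singleton]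
    constructor
    · rintro ⟨hx, hpx⟩
      have h1 : ((s0.1 : ℤ), (s0.2 : ℤ)) = ((x.1 : ℤ), (x.2 : ℤ)) := by
        rw [hps0] at hpx
        obtain ⟨h1, h2⟩ := Prod.mk.injEq .. ▸ hpx
        exact Prod.ext (by omega) (by omega)
      obtain ⟨e1, e2⟩ := Prod.mk.injEq .. ▸ h1
      exact (Prod.ext (by exact_mod_cast e1.symm) (by exact_mod_cast e2.symm) : x = s0)
    · rintro rfl; exact ⟨hs0, hps0⟩
  · rw [Finset.card_eq_zero, Finset.filter_eq_empty_iff]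
    intro x hx hpx
    exact hex ⟨x, hx, hpx⟩

lemma PP_pos {r : ℕ} {μ : Fin r → Finset (ℕ × ℕ)} (hY : ∀ a, IsYoung (μ a))
    {p : ℤ × ℤ} {a : Fin r} (h : PP μ p a) :
    1 ≤ p.1 + (a : ℕ) + 1 ∧ 1 ≤ p.2 + (a : ℕ) + 1 := by
  obtain ⟨s, hs, rfl⟩ := h
  obtain ⟨h1, h2⟩ := (hY a).1 s hs
  constructor <;> simp <;> omega

lemma PP_lower {r : ℕ} {μ : Fin r → Finset (ℕ × ℕ)} (hY : ∀ a, IsYoung (μ a))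
    (hn : Nested μ) {p : ℤ × ℤ} {a a' : Fin r} (hle : a' ≤ a) (h : PP μ p a)
    (h1 : 1 ≤ p.1 + (a' : ℕ) + 1) (h2 : 1 ≤ p.2 + (a' : ℕ) + 1) : PP μ p a' := by
  obtain ⟨s, hs, rfl⟩ := h
  have hs' : s ∈ μ a' := hn a' a hle hs
  have hle' : (a' : ℕ) ≤ (a : ℕ) := hle
  simp only at h1 h2
  refine ⟨((((s.1 : ℤ) - ((a : ℕ) + 1) + (a' : ℕ) + 1).toNat),
          (((s.2 : ℤ) - ((a : ℕ) + 1) + (a' : ℕ) + 1).toNat)), ?_, ?_⟩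
  · exact (hY a').2 s hs' _ _ (by omega) (by omega) (by omega) (by omega)
  · have e1 : ((((s.1 : ℤ) - ((a : ℕ) + 1) + (a' : ℕ) + 1).toNat : ℤ)
        = (s.1 : ℤ) - ((a : ℕ) + 1) + (a' : ℕ) + 1) := by omega
    have e2 : ((((s.2 : ℤ) - ((a : ℕ) + 1) + (a' : ℕ) + 1).toNat : ℤ)
        = (s.2 : ℤ) - ((a : ℕ) + 1) + (a' : ℕ) + 1) := by omega
    refine Prod.ext ?_ ?_ <;> simp only [e1, e2] <;> ring

lemma nat_interval (S : Finset ℕ) (t : ℕ) (h1 : ∀ x ∈ S, t ≤ x)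
    (h2 : ∀ x ∈ S, ∀ y, t ≤ y → y ≤ x → y ∈ S) :
    S = Finset.Ico t (t + S.card) := by
  rcases S.eq_empty_or_nonempty with rfl | hne
  · simp
  · have hM := S.max'_mem hne
    have hS : S = Finset.Icc t (S.max' hne) := by
      ext x
      simp only [Finset.mem_Icc]
      exact ⟨fun hx => ⟨h1 x hx, S.le_max' x hx⟩, fun ⟨ha, hb⟩ => h2 _ hM x ha hb⟩
    have htM : t ≤ S.max' hne := h1 _ hM
    rw [hS, Nat.card_Icc]
    have : t + (S.max' hne + 1 - t) = S.max' hne + 1 := by omega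
    rw [this, Finset.Ico_add_one_right_eq_Icc]

lemma subset_of_shift {r : ℕ} {μ lam : Fin r → Finset (ℕ × ℕ)}
    (hYμ : ∀ a, IsYoung (μ a)) (hYlam : ∀ a, IsYoung (lam a))
    (hμnest : Nested μ) (hlamnest : Nested lam)
    (h : shiftedCells μ = shiftedCells lam) : ∀ a, μ a ⊆ lam a := by
  have key : ∀ (p : ℤ × ℤ) (a : Fin r), PP μ p a → PP lam p a := by
    intro p a hPμ
    set t := max (Int.toNat (-p.1)) (Int.toNat (-p.2)) with ht
    have hpos : ∀ b : Fin r,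
        (t ≤ (b : ℕ)) ↔ (1 ≤ p.1 + (b : ℕ) + 1 ∧ 1 ≤ p.2 + (b : ℕ) + 1) := by
      intro b; rw [ht]; omega
    have hint : ∀ (ν : Fin r → Finset (ℕ × ℕ)), (∀ a, IsYoung (ν a)) → Nested ν →
        (Finset.univ.filter (fun b => PP ν p b)).image Fin.val =
          Finset.Ico t (t + (Finset.univ.filter (fun b => PP ν p b)).card) := by
      intro ν hY hn
      rw [← Finset.card_image_of_injective _ Fin.val_injective]
      apply nat_interval
      · intro x hx
        simp only [Finset.mem_image, Finset.mem_filter] at hx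
        obtain ⟨b, ⟨-, hb⟩, rfl⟩ := hx
        exact (hpos b).2 (PP_pos hY hb)
      · intro x hx y hty hyx
        simp only [Finset.mem_image, Finset.mem_filter] at hx ⊢
        obtain ⟨b, ⟨-, hb⟩, rfl⟩ := hx
        have hy : y < r := lt_of_le_of_lt hyx b.isLt
        refine ⟨⟨y, hy⟩, ⟨Finset.mem_univ _, ?_⟩, rfl⟩
        have hp := (hpos ⟨y, hy⟩).1 hty
        exact PP_lower hY hn (show (⟨y, hy⟩ : Fin r) ≤ b from hyx) hb hp.1 hp.2
    have hcard : (Finset.univ.filter (fun b => PP μ p b)).card =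
        (Finset.univ.filter (fun b => PP lam p b)).card := by
      rw [← count_shifted, ← count_shifted, h]
    have himg : (Finset.univ.filter (fun b => PP μ p b)).image Fin.val =
        (Finset.univ.filter (fun b => PP lam p b)).image Fin.val := by
      rw [hint μ hYμ hμnest, hint lam hYlam hlamnest, hcard]
    have hmem : (a : ℕ) ∈ (Finset.univ.filter (fun b => PP lam p b)).image Fin.val := by
      rw [← himg]
      exact Finset.mem_image_of_mem _ (Finset.mem_filter.2 ⟨Finset.mem_univ _, hPμ⟩)
    simp only [Finset.mem_image, Finset.mem_filter] at hmem
    obtain ⟨b, ⟨-, hb⟩, hba⟩ := hmem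
    rwa [show b = a from Fin.val_injective hba] at hb
  intro a s hs
  have hPμ : PP μ ((s.1 : ℤ) - ((a : ℕ) + 1 : ℤ), (s.2 : ℤ) - ((a : ℕ) + 1 : ℤ)) a :=
    ⟨s, hs, rfl⟩
  obtain ⟨s', hs', hps'⟩ := key _ a hPμ
  obtain ⟨e1, e2⟩ := Prod.mk.injEq .. ▸ hps'
  have : s = s' := Prod.ext (by omega) (by omega)
  rwa [this]

/-- Let `μ` and `λ` be nested `r`-partitions of `n`. If the multisets of
points `{(i(s) − a, j(s) − a) : 1 ≤ a ≤ r, s ∈ μ_a}` and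
`{(i(s) − a, j(s) − a) : 1 ≤ a ≤ r, s ∈ λ_a}` coincide, then `μ_a = λ_a` for all `a`. -/
theorem stmt15 (r n : ℕ) (hr : 1 ≤ r) (μ lam : Fin r → Finset (ℕ × ℕ))
    (hYμ : ∀ a, IsYoung (μ a)) (hYlam : ∀ a, IsYoung (lam a))
    (hμn : ∑ a, (μ a).card = n) (hlamn : ∑ a, (lam a).card = n)
    (hμnest : Nested μ) (hlamnest : Nested lam)
    (h : shiftedCells μ = shiftedCells lam) :
    ∀ a, μ a = lam a := fun a =>
  Finset.Subset.antisymm (subset_of_shift hYμ hYlam hμnest hlamnest h a)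
    (subset_of_shift hYlam hYμ hlamnest hμnest h.symm a)
end
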